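/- arXiv:math/0311319 — 7 statements merged into one kernel-verified Lean document; each statement's English description precedes it below -/
import Mathlib

section
/- Let p be a prime, a a positive integer, and n a positive integer not divisible by p. For every monic irreducible polynomial h₁ ∈ (ZMod p)[X] dividing X^n − 1, there exists a unique monic polynomial h ∈ (ZMod p^a)[X] such that h divides X^n − 1 in (ZMod p^a)[X] and the image of h under the coefficientwise reduction map (ZMod p^a)[X] → (ZMod p)[X] equals h₁; moreover this h is irreducible in (ZMod p^a)[X]. -/
/-!
Reduction `ZMod (p ^ a) → ZMod p` is surjective with kernel `(p)`, a nilpotent ideal. As `p ∤ n`,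
`X ^ n - 1` is separable mod `p`, so `h₁` is coprime to its cofactor and the factorization lifts
by Hensel's lemma: a factorization modulo `pʲ` is corrected to one modulo `pʲ⁺¹`, keeping the
factor over `h₁` monic, until `pʲ = 0`. Because the kernel is nil, units, coprimality and
irreducibility all descend from `ZMod p` to `ZMod (p ^ a)`; uniqueness follows since two such
lifts of `h₁` are each coprime to the other's cofactor, hence divide each other.
-/

open Polynomial

section NilKernel

variable {A B : Type*} [CommRing A] [CommRing B] {φ : A →+* B}

theorem IsUnit.of_map_of_ker_le_nilradical (hφ : Function.Surjective φ)
    (hker : RingHom.ker φ ≤ nilradical A) {x : A} (hx : IsUnit (φ x)) : IsUnit x := by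
  obtain ⟨y, hy⟩ := hφ ↑hx.unit⁻¹
  have hnil : IsNilpotent (x * y - 1) := hker (by simp [hy])
  exact isUnit_of_mul_isUnit_left (by simpa using hnil.isUnit_add_one)

theorem IsCoprime.of_map_of_ker_le_nilradical (hφ : Function.Surjective φ)
    (hker : RingHom.ker φ ≤ nilradical A) {x y : A} (hxy : IsCoprime (φ x) (φ y)) :
    IsCoprime x y := by
  obtain ⟨u, v, huv⟩ := hxy
  obtain ⟨u, rfl⟩ := hφ u
  obtain ⟨v, rfl⟩ := hφ v
  have hunit : IsUnit (u * x + v * y) :=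
    .of_map_of_ker_le_nilradical hφ hker (by simp [huv])
  obtain ⟨w, hw⟩ := hunit.exists_left_inv
  exact ⟨w * u, w * v, by linear_combination hw⟩

theorem Irreducible.of_map_of_ker_le_nilradical (hφ : Function.Surjective φ)
    (hker : RingHom.ker φ ≤ nilradical A) {x : A} (hx : Irreducible (φ x)) : Irreducible x where
  not_isUnit hu := hx.not_isUnit (hu.map φ)
  isUnit_or_isUnit b c hbc := (hx.isUnit_or_isUnit (by rw [hbc, map_mul])).imp
    (.of_map_of_ker_le_nilradical hφ hker) (.of_map_of_ker_le_nilradical hφ hker)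

end NilKernel

namespace Polynomial

variable {R S : Type*} [CommRing R] [CommRing S] {π : R →+* S}

theorem ker_mapRingHom_le_nilradical (hker : RingHom.ker π ≤ nilradical R) :
    RingHom.ker (mapRingHom π) ≤ nilradical R[X] := fun q hq ↦
  Polynomial.isNilpotent_iff.mpr fun i ↦ hker (by simpa using congr_arg (coeff · i) hq)

theorem C_dvd_of_map_eq_zero {t : R} (hker : RingHom.ker π ≤ Ideal.span {t}) {q : R[X]}
    (hq : q.map π = 0) : C t ∣ q := by
  have hq : q ∈ RingHom.ker (mapRingHom π) := hq
  rw [ker_mapRingHom] at hq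
  have := Ideal.map_mono (f := C) hker hq
  rwa [Ideal.map_span, Set.image_singleton, Ideal.mem_span_singleton] at this

theorem Monic.eq_of_dvd_of_dvd {p q : R[X]} (hp : p.Monic) (hq : q.Monic) (hpq : p ∣ q)
    (hqp : q ∣ p) : p = q := by
  obtain ⟨a, rfl⟩ := hpq
  obtain ⟨b, hb⟩ := hqp
  have hab : a * b = 1 :=
    hp.isRegular.left (show p * (a * b) = p * 1 by rw [← mul_assoc, ← hb, mul_one])
  exact eq_of_monic_of_associated hp hq
    (associated_mul_unit_left p a (.of_mul_eq_one b hab)).symm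

theorem eq_of_monic_of_dvd_of_map_eq (hπ : Function.Surjective π)
    (hker : RingHom.ker π ≤ nilradical R) {f h h' : R[X]} {g₁ : S[X]}
    (hm : h.Monic) (hm' : h'.Monic) (heq : h'.map π = h.map π) (hco : IsCoprime (h.map π) g₁)
    (hf : f.map π = h.map π * g₁) (hd : h ∣ f) (hd' : h' ∣ f) : h = h' := by
  have hdvd {k k' c : R[X]} (hk : k.map π = h.map π) (hk' : k'.map π = h.map π)
      (hfc : f = k' * c) (hkf : k ∣ f) : k ∣ k' := by
    have hc : c.map π = g₁ := (hm.map π).isRegular.left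
      (show h.map π * c.map π = h.map π * g₁ by rw [← hf, hfc, Polynomial.map_mul, hk'])
    have hkc : IsCoprime k c := .of_map_of_ker_le_nilradical (φ := mapRingHom π)
      (map_surjective π hπ) (ker_mapRingHom_le_nilradical hker) (by simpa [hk, hc] using hco)
    exact hkc.dvd_of_dvd_mul_right (hfc ▸ hkf)
  obtain ⟨g, hg⟩ := hd
  obtain ⟨g', hg'⟩ := hd'
  exact hm.eq_of_dvd_of_dvd hm' (hdvd rfl heq hg' ⟨g, hg⟩) (hdvd heq rfl hg ⟨g', hg'⟩)

section Lifting

variable [Nontrivial S] {t : R}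

theorem exists_lift_of_C_pow_dvd_sub_mul (hπ : Function.Surjective π)
    (hker : RingHom.ker π = Ideal.span {t}) {f h g : R[X]} (hm : h.Monic)
    (hco : IsCoprime (h.map π) (g.map π)) {j : ℕ} (hj : j ≠ 0) (hdvd : C t ^ j ∣ f - h * g) :
    ∃ h' g' : R[X], h'.Monic ∧ h'.map π = h.map π ∧ g'.map π = g.map π ∧
      C t ^ (j + 1) ∣ f - h' * g' := by
  obtain ⟨c, hc⟩ := hdvd
  obtain ⟨u, v, huv⟩ := hco
  -- Choose `δh, δg` with `δh * g + δg * h ≡ c` mod `t` and `deg δh < deg h`,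
  -- so that `h + tʲ * δh` stays monic.
  set r := (c.map π * v) %ₘ h.map π
  set q := (c.map π * v) /ₘ h.map π
  have hrq : r + h.map π * q = c.map π * v := modByMonic_add_div _ _
  obtain ⟨δh, hδh, hδhdeg⟩ := exists_degree_eq_of_mem_lifts (mem_lifts_of_surjective hπ r)
  obtain ⟨δg, hδg⟩ := map_surjective π hπ (c.map π * u + q * g.map π)
  have hπt : π t = 0 := by rw [← RingHom.mem_ker, hker]; exact Ideal.mem_span_singleton_self t
  have hdeg : (C t ^ j * δh).degree < h.degree := calc
    (C t ^ j * δh).degree ≤ δh.degree := by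
      rw [← C_pow, ← smul_eq_C_mul]; exact degree_smul_le _ _
    _ = r.degree := hδhdeg
    _ < (h.map π).degree := degree_modByMonic_lt _ (hm.map π)
    _ = h.degree := hm.degree_map π
  have hkill : ∀ p : R[X], (C t ^ j * p).map π = 0 := fun p ↦ by
    simp [hπt, hj]
  refine ⟨h + C t ^ j * δh, g + C t ^ j * δg, hm.add_of_left hdeg, by simp [hkill],
    by simp [hkill], ?_⟩
  have hw : f - (h + C t ^ j * δh) * (g + C t ^ j * δg)
      = C t ^ j * (c - (δh * g + δg * h + C t ^ j * (δh * δg))) := by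
    linear_combination hc
  rw [hw, pow_succ]
  refine mul_dvd_mul_left _ (C_dvd_of_map_eq_zero hker.le ?_)
  simp only [Polynomial.map_sub, Polynomial.map_add, Polynomial.map_mul, hkill, hδh, hδg]
  linear_combination (-(g.map π)) * hrq - c.map π * huv

theorem exists_monic_lift_of_map_eq_mul (hπ : Function.Surjective π)
    (hker : RingHom.ker π = Ideal.span {t}) (ht : IsNilpotent t) {f : R[X]} {h₁ g₁ : S[X]}
    (hh₁ : h₁.Monic) (hco : IsCoprime h₁ g₁) (hf : f.map π = h₁ * g₁) :
    ∃ h g : R[X], h.Monic ∧ h.map π = h₁ ∧ g.map π = g₁ ∧ f = h * g := by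
  have hlift : ∀ j : ℕ, ∃ h g : R[X], h.Monic ∧ h.map π = h₁ ∧ g.map π = g₁ ∧
      C t ^ (j + 1) ∣ f - h * g := by
    intro j
    induction j with
    | zero =>
      obtain ⟨h, hh, -, hm⟩ :=
        lifts_and_degree_eq_and_monic (mem_lifts_of_surjective hπ h₁) hh₁
      obtain ⟨g, hg⟩ := map_surjective π hπ g₁
      refine ⟨h, g, hm, hh, hg, ?_⟩
      rw [zero_add, pow_one]
      exact C_dvd_of_map_eq_zero hker.le (by simp [hh, hg, hf])
    | succ j ih =>
      obtain ⟨h, g, hm, rfl, rfl, hdvd⟩ := ih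
      exact exists_lift_of_C_pow_dvd_sub_mul hπ hker hm hco j.succ_ne_zero hdvd
  obtain ⟨m, htm⟩ := ht
  obtain ⟨h, g, hm, hh, hg, hdvd⟩ := hlift m
  rw [← C_pow, pow_succ, htm, zero_mul, C_0, zero_dvd_iff, sub_eq_zero] at hdvd
  exact ⟨h, g, hm, hh, hg, hdvd⟩

end Lifting

end Polynomial

theorem ZMod.ker_castHom {m n : ℕ} (hnm : n ∣ m) :
    RingHom.ker (ZMod.castHom hnm (ZMod n)) = Ideal.span {(n : ZMod m)} := by
  ext x
  rw [RingHom.mem_ker, Ideal.mem_span_singleton]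
  refine ⟨fun hx ↦ ?_, ?_⟩
  · obtain ⟨k, rfl⟩ := ZMod.intCast_surjective x
    rw [map_intCast, ZMod.intCast_zmod_eq_zero_iff_dvd] at hx
    obtain ⟨l, rfl⟩ := hx
    exact ⟨l, by push_cast; rfl⟩
  · rintro ⟨y, rfl⟩
    rw [map_mul, map_natCast, ZMod.natCast_self, zero_mul]

theorem stmt0_general (p : ℕ) [Fact p.Prime] (a n : ℕ) (ha : 0 < a) (hpn : ¬ p ∣ n)
    (h₁ : Polynomial (ZMod p)) (h₁monic : h₁.Monic) (h₁irr : Irreducible h₁)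
    (h₁dvd : h₁ ∣ (X ^ n - 1 : Polynomial (ZMod p))) :
    (∃! h : Polynomial (ZMod (p ^ a)), h.Monic ∧ h ∣ (X ^ n - 1) ∧
        h.map (ZMod.castHom (dvd_pow_self p ha.ne') (ZMod p)) = h₁) ∧
    (∀ h : Polynomial (ZMod (p ^ a)), h.Monic → h ∣ (X ^ n - 1) →
        h.map (ZMod.castHom (dvd_pow_self p ha.ne') (ZMod p)) = h₁ → Irreducible h) := by
  set π := ZMod.castHom (dvd_pow_self p ha.ne') (ZMod p)
  have hπ : Function.Surjective π := ZMod.ringHom_surjective π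
  have hker : RingHom.ker π = Ideal.span {(p : ZMod (p ^ a))} := ZMod.ker_castHom _
  have hp : IsNilpotent (p : ZMod (p ^ a)) := ⟨a, by rw [← Nat.cast_pow, ZMod.natCast_self]⟩
  have hnil : RingHom.ker π ≤ nilradical (ZMod (p ^ a)) := by
    rw [hker, Ideal.span_singleton_le_iff_mem]
    exact hp
  obtain ⟨g₁, hg₁⟩ := h₁dvd
  have hsep : (X ^ n - 1 : (ZMod p)[X]).Separable := by
    simpa using
      separable_X_pow_sub_C (1 : ZMod p) (by rwa [Ne, ZMod.natCast_eq_zero_iff]) one_ne_zero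
  have hco : IsCoprime h₁ g₁ := (hg₁ ▸ hsep).isCoprime
  have hf : (X ^ n - 1 : (ZMod (p ^ a))[X]).map π = h₁ * g₁ := by simp [← hg₁]
  obtain ⟨h, g, hm, rfl, -, hfac⟩ :=
    exists_monic_lift_of_map_eq_mul hπ hker hp h₁monic hco hf
  refine ⟨⟨h, ⟨hm, ⟨g, hfac⟩, rfl⟩, fun h' ⟨hm', hd', hh'⟩ ↦ ?_⟩,
    fun h' _ _ hh' ↦ ?_⟩
  · exact (eq_of_monic_of_dvd_of_map_eq hπ hnil hm hm' hh' hco hf ⟨g, hfac⟩ hd').symm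
  · exact .of_map_of_ker_le_nilradical (map_surjective π hπ)
      (ker_mapRingHom_le_nilradical hnil) (by rwa [coe_mapRingHom, hh'])

theorem stmt0 (p : ℕ) [Fact p.Prime] (a n : ℕ) (ha : 0 < a) (hn : 0 < n) (hpn : ¬ p ∣ n)
    (h₁ : Polynomial (ZMod p)) (h₁monic : h₁.Monic) (h₁irr : Irreducible h₁)
    (h₁dvd : h₁ ∣ (X ^ n - 1 : Polynomial (ZMod p))) :
    (∃! h : Polynomial (ZMod (p ^ a)), h.Monic ∧ h ∣ (X ^ n - 1) ∧
        h.map (ZMod.castHom (dvd_pow_self p ha.ne') (ZMod p)) = h₁) ∧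
    (∀ h : Polynomial (ZMod (p ^ a)), h.Monic → h ∣ (X ^ n - 1) →
        h.map (ZMod.castHom (dvd_pow_self p ha.ne') (ZMod p)) = h₁ → Irreducible h) :=
  stmt0_general p a n ha hpn h₁ h₁monic h₁irr h₁dvd
end

section
/- Let p be a prime and n a positive integer not divisible by p. For every monic irreducible polynomial h₁ ∈ (ZMod p)[X] dividing X^n − 1, there exists a unique monic polynomial h ∈ ℤ_p[X] such that h divides X^n − 1 in ℤ_p[X] and the image of h under the coefficientwise reduction map ℤ_p[X] → (ZMod p)[X] equals h₁; moreover this h is irreducible in ℤ_p[X]. -/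
/-!
Hensel's lemma by successive approximation. If `G, K` are monic lifts of the coprime factors
`g₀, k₀` with `f - G K = π ^ (k + 1) D`, the degree-bounded Bézout identity
`a k₀ + b g₀ = D mod π` (`deg a < deg g₀`, `deg b < deg k₀`) gives monic corrections
`G + π ^ (k + 1) a`,
`K + π ^ (k + 1) b` that factor `f` modulo `π ^ (k + 2)`; completeness yields a factorization
`f = G K`. The same identity, read as a uniqueness statement, forces two such lifts to agree
modulo every power of `π`. For `X ^ n - 1` with `p ∤ n` the reduction is separable, so `h₁` is
coprime to its cofactor, and a monic polynomial with irreducible reduction is irreducible.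
-/

open Polynomial

section DegreeBoundedBezout

variable {S : Type*} [CommRing S] {g k : S[X]}

theorem IsCoprime.exists_mul_add_mul_eq_of_degree_lt [Nontrivial S] (hgk : IsCoprime g k)
    (hg : g.Monic) (hk : k.Monic) {d : S[X]} (hd : d.degree < g.degree + k.degree) :
    ∃ a b : S[X], a.degree < g.degree ∧ b.degree < k.degree ∧ a * k + b * g = d := by
  obtain ⟨u, w, huw⟩ := hgk
  set a := d * w %ₘ g
  set b := d * u + d * w /ₘ g * k
  have hab : a * k + b * g = d := by
    linear_combination d * huw + k * modByMonic_add_div (d * w) g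
  have ha : a.degree < g.degree := degree_modByMonic_lt _ hg
  refine ⟨a, b, ha, ?_, hab⟩
  have hbg : (b * g).degree < k.degree + g.degree := by
    rw [eq_sub_of_add_eq' hab, add_comm k.degree]
    refine (degree_sub_le _ _).trans_lt (max_lt hd ?_)
    rwa [hk.degree_mul, WithBot.add_lt_add_iff_right (degree_ne_bot.2 hk.ne_zero)]
  rwa [hg.degree_mul, WithBot.add_lt_add_iff_right (degree_ne_bot.2 hg.ne_zero)] at hbg

theorem IsCoprime.eq_zero_of_mul_add_mul_eq_zero (hgk : IsCoprime g k) (hg : g.Monic)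
    {a b : S[X]} (ha : a.degree < g.degree) (hab : a * k + b * g = 0) : a = 0 ∧ b = 0 := by
  have hga : g ∣ a := hgk.dvd_of_dvd_mul_right ⟨-b, by linear_combination hab⟩
  have ha0 : a = 0 := by_contra fun h => hg.not_dvd_of_degree_lt h ha hga
  refine ⟨ha0, ?_⟩
  rwa [ha0, zero_mul, zero_add, hg.mul_left_eq_zero_iff] at hab

end DegreeBoundedBezout

section AdicLimits

variable {R : Type*} [CommRing R] {π : R}

theorem Ideal.mem_span_singleton_pow_smul_top {x : R} {k : ℕ} :
    x ∈ (Ideal.span {π} ^ k • ⊤ : Submodule R R) ↔ π ^ k ∣ x := by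
  rw [smul_eq_mul, Ideal.mul_top, Ideal.span_singleton_pow, Ideal.mem_span_singleton]

theorem pow_dvd_sub_of_forall_pow_dvd_succ_sub {x : ℕ → R}
    (hx : ∀ k, π ^ k ∣ x (k + 1) - x k) {m n : ℕ} (hmn : m ≤ n) : π ^ m ∣ x n - x m := by
  induction n, hmn using Nat.le_induction with
  | base => simp
  | succ n hmn ih =>
    rw [← sub_add_sub_cancel]
    exact dvd_add ((pow_dvd_pow π hmn).trans (hx n)) ih

theorem IsPrecomplete.exists_forall_pow_dvd_sub [IsPrecomplete (Ideal.span {π}) R]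
    {x : ℕ → R} (hx : ∀ k, π ^ k ∣ x (k + 1) - x k) : ∃ L, ∀ k, π ^ k ∣ x k - L := by
  simp_rw [← Ideal.mem_span_singleton_pow_smul_top, ← SModEq.sub_mem]
  refine IsPrecomplete.prec ‹_› fun hmn => ?_
  rw [SModEq.sub_mem, Ideal.mem_span_singleton_pow_smul_top, dvd_sub_comm]
  exact pow_dvd_sub_of_forall_pow_dvd_succ_sub hx hmn

theorem IsHausdorff.eq_zero_of_forall_pow_dvd [IsHausdorff (Ideal.span {π}) R] {x : R}
    (hx : ∀ k, π ^ k ∣ x) : x = 0 :=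
  IsHausdorff.haus ‹_› x fun k =>
    SModEq.zero.2 (Ideal.mem_span_singleton_pow_smul_top.2 (hx k))

namespace Polynomial

theorem C_pow_dvd_iff_dvd_coeff {k : ℕ} {f : R[X]} :
    C π ^ k ∣ f ↔ ∀ i, π ^ k ∣ f.coeff i := by
  rw [← C_pow, C_dvd_iff_dvd_coeff]

theorem eq_zero_of_forall_C_pow_dvd [IsHausdorff (Ideal.span {π}) R] {f : R[X]}
    (hf : ∀ k, C π ^ k ∣ f) : f = 0 := by
  ext i
  exact IsHausdorff.eq_zero_of_forall_pow_dvd fun k => C_pow_dvd_iff_dvd_coeff.1 (hf k) i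

theorem exists_degree_lt_forall_C_pow_dvd_sub [IsPrecomplete (Ideal.span {π}) R] {d : ℕ}
    {F : ℕ → R[X]} (hF : ∀ k, C π ^ k ∣ F (k + 1) - F k) (hdeg : ∀ k, (F k).degree < d) :
    ∃ f : R[X], f.degree < d ∧ ∀ k, C π ^ k ∣ F k - f := by
  have hcoeff (i : ℕ) : ∃ L, ∀ k, π ^ k ∣ (F k).coeff i - L :=
    IsPrecomplete.exists_forall_pow_dvd_sub fun k => by
      simpa only [coeff_sub] using C_pow_dvd_iff_dvd_coeff.1 (hF k) i
  choose L hL using hcoeff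
  set f : degreeLT R d := (degreeLTEquiv R d).symm fun i => L i
  refine ⟨f, mem_degreeLT.1 f.2, fun k => ?_⟩
  refine C_pow_dvd_iff_dvd_coeff.2 fun i => ?_
  by_cases hi : i < d
  · have hfi : (f : R[X]).coeff i = L i :=
      congrFun ((degreeLTEquiv R d).apply_symm_apply fun i => L i) ⟨i, hi⟩
    rw [coeff_sub, hfi]
    exact hL i k
  · have hd : (d : WithBot ℕ) ≤ i := by exact_mod_cast not_lt.1 hi
    rw [coeff_sub, coeff_eq_zero_of_degree_lt ((hdeg k).trans_le hd),
      coeff_eq_zero_of_degree_lt ((mem_degreeLT.1 f.2).trans_le hd), sub_zero]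
    exact dvd_zero _

theorem exists_monic_forall_C_pow_dvd_sub [IsPrecomplete (Ideal.span {π}) R] [Nontrivial R]
    {d : ℕ} {F : ℕ → R[X]} (hF : ∀ k, C π ^ k ∣ F (k + 1) - F k) (hmonic : ∀ k, (F k).Monic)
    (hdeg : ∀ k, (F k).natDegree = d) : ∃ f : R[X], f.Monic ∧ ∀ k, C π ^ k ∣ F k - f := by
  have hlt (k : ℕ) : (F k - X ^ d).degree < (d : WithBot ℕ) := by
    have hFk : (F k).degree = d := by rw [degree_eq_natDegree (hmonic k).ne_zero, hdeg k]
    have := degree_sub_lt_left (q := X ^ d) (by rw [hFk, degree_X_pow]) (hmonic k).ne_zero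
      (by rw [(hmonic k).leadingCoeff, leadingCoeff_X_pow])
    rwa [hFk] at this
  obtain ⟨r, hr, hFr⟩ := exists_degree_lt_forall_C_pow_dvd_sub (F := fun k => F k - X ^ d)
    (fun k => by simpa only [sub_sub_sub_cancel_right] using hF k) hlt
  exact ⟨X ^ d + r, monic_X_pow_add hr, fun k => by
    simpa only [sub_sub, add_comm (X ^ d)] using hFr k⟩

end Polynomial

end AdicLimits

section HenselLifting

variable {R S : Type*} [CommRing R] [CommRing S] {π : R} {σ : R →+* S}

namespace Polynomial

theorem C_dvd_iff_map_eq_zero (hker : RingHom.ker σ = Ideal.span {π}) {f : R[X]} :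
    C π ∣ f ↔ f.map σ = 0 := by
  simp only [C_dvd_iff_dvd_coeff, Polynomial.ext_iff, coeff_map, coeff_zero, ← RingHom.mem_ker,
    hker, Ideal.mem_span_singleton]

theorem C_dvd_sub_iff_map_eq (hker : RingHom.ker σ = Ideal.span {π}) {f g : R[X]} :
    C π ∣ f - g ↔ f.map σ = g.map σ := by
  rw [C_dvd_iff_map_eq_zero hker, Polynomial.map_sub, sub_eq_zero]

theorem map_C_pow_succ_eq_zero (hker : RingHom.ker σ = Ideal.span {π}) (k : ℕ) :
    (C π ^ (k + 1)).map σ = 0 :=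
  (C_dvd_iff_map_eq_zero hker).1 (dvd_pow_self _ k.succ_ne_zero)

end Polynomial

structure IsLiftedFactorization (σ : R →+* S) (π : R) (f : R[X]) (g₀ k₀ : S[X]) (k : ℕ)
    (G K : R[X]) : Prop where
  monic_left : G.Monic
  monic_right : K.Monic
  map_left : G.map σ = g₀
  map_right : K.map σ = k₀
  dvd_sub_mul : C π ^ k ∣ f - G * K

namespace IsLiftedFactorization

variable {f G K : R[X]} {g₀ k₀ : S[X]} {k : ℕ}

theorem map_eq_mul (hker : RingHom.ker σ = Ideal.span {π})
    (h : IsLiftedFactorization σ π f g₀ k₀ (k + 1) G K) : f.map σ = g₀ * k₀ := by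
  rw [← h.map_left, ← h.map_right, ← Polynomial.map_mul, ← C_dvd_sub_iff_map_eq hker]
  exact (dvd_pow_self _ k.succ_ne_zero).trans h.dvd_sub_mul

theorem degree_sub_mul_lt [Nontrivial S] (hker : RingHom.ker σ = Ideal.span {π}) (hf : f.Monic)
    (h : IsLiftedFactorization σ π f g₀ k₀ (k + 1) G K) :
    (f - G * K).degree < g₀.degree + k₀.degree := by
  have := σ.domain_nontrivial
  have hGK := h.monic_left.mul h.monic_right
  have hmap : (G * K).map σ = f.map σ := by
    rw [Polynomial.map_mul, h.map_left, h.map_right, h.map_eq_mul hker]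
  calc (f - G * K).degree < f.degree :=
        degree_sub_lt_left (by rw [← hf.degree_map σ, ← hGK.degree_map σ, hmap]) hf.ne_zero
          (by rw [hf.leadingCoeff, hGK.leadingCoeff])
    _ = g₀.degree + k₀.degree := by
        have hk₀ : k₀.Monic := h.map_right ▸ h.monic_right.map σ
        rw [← hf.degree_map σ, h.map_eq_mul hker, hk₀.degree_mul]

theorem exists_succ [IsDomain R] [Nontrivial S] (hsurj : Function.Surjective σ)
    (hker : RingHom.ker σ = Ideal.span {π}) (hπ : π ≠ 0) (hf : f.Monic) (hcop : IsCoprime g₀ k₀)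
    (h : IsLiftedFactorization σ π f g₀ k₀ (k + 1) G K) :
    ∃ G' K', IsLiftedFactorization σ π f g₀ k₀ (k + 2) G' K' ∧
      C π ^ (k + 1) ∣ G' - G ∧ C π ^ (k + 1) ∣ K' - K := by
  have hg₀ : g₀.Monic := h.map_left ▸ h.monic_left.map σ
  have hk₀ : k₀.Monic := h.map_right ▸ h.monic_right.map σ
  have degree_C_pow_mul (P : R[X]) : (C π ^ (k + 1) * P).degree = P.degree := by
    rw [← C_pow, degree_C_mul (pow_ne_zero _ hπ)]
  obtain ⟨D, hD⟩ := h.dvd_sub_mul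
  have hD_deg : (D.map σ).degree < g₀.degree + k₀.degree := by
    refine degree_map_le.trans_lt ?_
    rw [← degree_C_pow_mul, ← hD]
    exact h.degree_sub_mul_lt hker hf
  obtain ⟨a, b, ha, hb, hab⟩ := hcop.exists_mul_add_mul_eq_of_degree_lt hg₀ hk₀ hD_deg
  obtain ⟨A, hA, hA_deg⟩ := exists_degree_eq_of_mem_lifts (mem_lifts_of_surjective hsurj a)
  obtain ⟨B, hB, hB_deg⟩ := exists_degree_eq_of_mem_lifts (mem_lifts_of_surjective hsurj b)
  obtain ⟨E, hE⟩ : C π ∣ D - (A * K + B * G) := by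
    rw [C_dvd_sub_iff_map_eq hker, Polynomial.map_add, Polynomial.map_mul, Polynomial.map_mul,
      hA, hB, h.map_left, h.map_right, hab]
  refine ⟨G + C π ^ (k + 1) * A, K + C π ^ (k + 1) * B, ⟨?_, ?_, ?_, ?_, ?_⟩,
    ⟨A, by ring⟩, ⟨B, by ring⟩⟩
  · refine h.monic_left.add_of_left ?_
    rwa [degree_C_pow_mul, hA_deg, ← h.monic_left.degree_map σ, h.map_left]
  · refine h.monic_right.add_of_left ?_
    rwa [degree_C_pow_mul, hB_deg, ← h.monic_right.degree_map σ, h.map_right]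
  · rw [Polynomial.map_add, Polynomial.map_mul, map_C_pow_succ_eq_zero hker, zero_mul, add_zero,
      h.map_left]
  · rw [Polynomial.map_add, Polynomial.map_mul, map_C_pow_succ_eq_zero hker, zero_mul, add_zero,
      h.map_right]
  · -- the quadratic error `π ^ (2 k + 2) A B` is divisible by `π ^ (k + 2)`
    exact ⟨E - C π ^ k * A * B, by linear_combination hD + C π ^ (k + 1) * hE⟩

theorem exists_seq [IsDomain R] [Nontrivial S] (hsurj : Function.Surjective σ)
    (hker : RingHom.ker σ = Ideal.span {π}) (hπ : π ≠ 0) (hf : f.Monic) (hcop : IsCoprime g₀ k₀)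
    (h : IsLiftedFactorization σ π f g₀ k₀ 1 G K) :
    ∃ Gs Ks : ℕ → R[X], ∀ n, IsLiftedFactorization σ π f g₀ k₀ (n + 1) (Gs n) (Ks n) ∧
      C π ^ (n + 1) ∣ Gs (n + 1) - Gs n ∧ C π ^ (n + 1) ∣ Ks (n + 1) - Ks n := by
  choose! G' K' hstep using fun n G K (h : IsLiftedFactorization σ π f g₀ k₀ (n + 1) G K) =>
    h.exists_succ hsurj hker hπ hf hcop
  let GKs : ℕ → R[X] × R[X] := fun n =>
    Nat.rec (G, K) (fun n GK => (G' n GK.1 GK.2, K' n GK.1 GK.2)) n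
  have hGKs (n : ℕ) : IsLiftedFactorization σ π f g₀ k₀ (n + 1) (GKs n).1 (GKs n).2 := by
    induction n with
    | zero => exact h
    | succ n ih => exact (hstep n _ _ ih).1
  exact ⟨fun n => (GKs n).1, fun n => (GKs n).2, fun n => ⟨hGKs n, (hstep n _ _ (hGKs n)).2⟩⟩

end IsLiftedFactorization

namespace Polynomial

theorem eq_mul_of_forall_C_pow_dvd_sub [IsHausdorff (Ideal.span {π}) R] {f G K : R[X]}
    {Gs Ks : ℕ → R[X]} (hf : ∀ n, C π ^ n ∣ f - Gs n * Ks n) (hG : ∀ n, C π ^ n ∣ Gs n - G)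
    (hK : ∀ n, C π ^ n ∣ Ks n - K) : f = G * K := by
  refine sub_eq_zero.1 (eq_zero_of_forall_C_pow_dvd (π := π) fun n => ?_)
  have hsplit : f - G * K = (f - Gs n * Ks n) + (Gs n - G) * Ks n + G * (Ks n - K) := by ring
  rw [hsplit]
  exact dvd_add (dvd_add (hf n) (dvd_mul_of_dvd_left (hG n) _)) (dvd_mul_of_dvd_right (hK n) _)

variable {f : R[X]} {g₀ k₀ : S[X]}

theorem exists_monic_lift_of_map_eq_mul_s1 [IsDomain R] [Nontrivial S]
    [IsAdicComplete (Ideal.span {π}) R] (hsurj : Function.Surjective σ)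
    (hker : RingHom.ker σ = Ideal.span {π}) (hπ : π ≠ 0) (hf : f.Monic) (hg₀ : g₀.Monic)
    (hk₀ : k₀.Monic) (hcop : IsCoprime g₀ k₀) (hfac : f.map σ = g₀ * k₀) :
    ∃ G K : R[X], G.Monic ∧ K.Monic ∧ G.map σ = g₀ ∧ K.map σ = k₀ ∧ f = G * K := by
  obtain ⟨G₀, hG₀_map, -, hG₀⟩ :=
    lifts_and_degree_eq_and_monic (mem_lifts_of_surjective hsurj g₀) hg₀
  obtain ⟨K₀, hK₀_map, -, hK₀⟩ :=
    lifts_and_degree_eq_and_monic (mem_lifts_of_surjective hsurj k₀) hk₀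
  have h₀ : IsLiftedFactorization σ π f g₀ k₀ 1 G₀ K₀ := ⟨hG₀, hK₀, hG₀_map, hK₀_map, by
    rw [pow_one, C_dvd_sub_iff_map_eq hker, Polynomial.map_mul, hG₀_map, hK₀_map, hfac]⟩
  obtain ⟨Gs, Ks, hs⟩ := h₀.exists_seq hsurj hker hπ hf hcop
  obtain ⟨G, hG, hG_lim⟩ := exists_monic_forall_C_pow_dvd_sub
    (fun n => (pow_dvd_pow _ n.le_succ).trans (hs n).2.1) (fun n => (hs n).1.monic_left)
    (fun n => by rw [← (hs n).1.monic_left.natDegree_map σ, (hs n).1.map_left])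
  obtain ⟨K, hK, hK_lim⟩ := exists_monic_forall_C_pow_dvd_sub
    (fun n => (pow_dvd_pow _ n.le_succ).trans (hs n).2.2) (fun n => (hs n).1.monic_right)
    (fun n => by rw [← (hs n).1.monic_right.natDegree_map σ, (hs n).1.map_right])
  refine ⟨G, K, hG, hK, ?_, ?_, eq_mul_of_forall_C_pow_dvd_sub
    (fun n => (pow_dvd_pow _ n.le_succ).trans (hs n).1.dvd_sub_mul) hG_lim hK_lim⟩
  · rw [← (hs 1).1.map_left, ← C_dvd_sub_iff_map_eq hker, dvd_sub_comm, ← pow_one (C π)]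
    exact hG_lim 1
  · rw [← (hs 1).1.map_right, ← C_dvd_sub_iff_map_eq hker, dvd_sub_comm, ← pow_one (C π)]
    exact hK_lim 1

theorem C_pow_succ_succ_dvd_sub_of_mul_eq_mul [IsDomain R] [Nontrivial S]
    (hker : RingHom.ker σ = Ideal.span {π}) (hπ : π ≠ 0) (hcop : IsCoprime g₀ k₀)
    {G K G' K' : R[X]} (hG : G.Monic) (hG' : G'.Monic) (hG_map : G.map σ = g₀)
    (hG'_map : G'.map σ = g₀) (hK_map : K.map σ = k₀) (hmul : G * K = G' * K') {m : ℕ}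
    (hGG' : C π ^ (m + 1) ∣ G' - G) (hKK' : C π ^ (m + 1) ∣ K' - K) :
    C π ^ (m + 2) ∣ G' - G ∧ C π ^ (m + 2) ∣ K' - K := by
  obtain ⟨s, hs⟩ := hGG'
  obtain ⟨t, ht⟩ := hKK'
  have hg₀ : g₀.Monic := hG_map ▸ hG.map σ
  have hst : s * K + t * G + C π ^ (m + 1) * s * t = 0 :=
    mul_left_cancel₀ (pow_ne_zero (m + 1) (C_ne_zero.2 hπ)) <| by
      linear_combination -hmul - K' * hs - (G + C π ^ (m + 1) * s) * ht
  have hs_deg : s.degree < g₀.degree := by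
    have hlt := degree_sub_lt_left (p := G') (q := G)
      (by rw [← hG'.degree_map σ, ← hG.degree_map σ, hG_map, hG'_map]) hG'.ne_zero
      (by rw [hG'.leadingCoeff, hG.leadingCoeff])
    rwa [hs, ← C_pow, degree_C_mul (pow_ne_zero _ hπ), ← hG'.degree_map σ, hG'_map] at hlt
  have hst_map : s.map σ * k₀ + t.map σ * g₀ = 0 := by
    simpa only [Polynomial.map_add, Polynomial.map_mul, Polynomial.map_zero,
      map_C_pow_succ_eq_zero hker, zero_mul, add_zero, hG_map, hK_map] using congrArg (map σ) hst
  obtain ⟨hs₀, ht₀⟩ := hcop.eq_zero_of_mul_add_mul_eq_zero hg₀ (degree_map_le.trans_lt hs_deg)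
    hst_map
  rw [hs, ht, pow_succ]
  exact ⟨mul_dvd_mul_left _ ((C_dvd_iff_map_eq_zero hker).2 hs₀),
    mul_dvd_mul_left _ ((C_dvd_iff_map_eq_zero hker).2 ht₀)⟩

theorem eq_and_eq_of_mul_eq_mul_of_map_eq [IsDomain R] [Nontrivial S]
    [IsHausdorff (Ideal.span {π}) R] (hker : RingHom.ker σ = Ideal.span {π}) (hπ : π ≠ 0)
    (hcop : IsCoprime g₀ k₀) {G K G' K' : R[X]} (hG : G.Monic) (hG' : G'.Monic)
    (hG_map : G.map σ = g₀) (hG'_map : G'.map σ = g₀) (hK_map : K.map σ = k₀)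
    (hK'_map : K'.map σ = k₀) (hmul : G * K = G' * K') : G = G' ∧ K = K' := by
  have hdvd (m : ℕ) : C π ^ (m + 1) ∣ G' - G ∧ C π ^ (m + 1) ∣ K' - K := by
    induction m with
    | zero =>
      rw [zero_add, pow_one, C_dvd_sub_iff_map_eq hker, C_dvd_sub_iff_map_eq hker]
      exact ⟨hG'_map.trans hG_map.symm, hK'_map.trans hK_map.symm⟩
    | succ m ih =>
      exact C_pow_succ_succ_dvd_sub_of_mul_eq_mul hker hπ hcop hG hG' hG_map hG'_map hK_map hmul
        ih.1 ih.2
  have hdvd' (m : ℕ) := (hdvd m).imp ((pow_dvd_pow _ m.le_succ).trans ·)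
    ((pow_dvd_pow _ m.le_succ).trans ·)
  exact ⟨(sub_eq_zero.1 (eq_zero_of_forall_C_pow_dvd (π := π) fun m => (hdvd' m).1)).symm,
    (sub_eq_zero.1 (eq_zero_of_forall_C_pow_dvd (π := π) fun m => (hdvd' m).2)).symm⟩

theorem eq_of_dvd_of_map_eq [IsDomain R] [Nontrivial S] [IsHausdorff (Ideal.span {π}) R]
    (hker : RingHom.ker σ = Ideal.span {π}) (hπ : π ≠ 0) (hcop : IsCoprime g₀ k₀)
    (hfac : f.map σ = g₀ * k₀) {G G' : R[X]} (hG : G.Monic) (hG' : G'.Monic)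
    (hG_map : G.map σ = g₀) (hG'_map : G'.map σ = g₀) (hGf : G ∣ f) (hG'f : G' ∣ f) :
    G = G' := by
  have hg₀ : g₀.Monic := hG_map ▸ hG.map σ
  have cofactor_map {H L : R[X]} (hH_map : H.map σ = g₀) (hHL : f = H * L) : L.map σ = k₀ :=
    hg₀.isRegular.left (show g₀ * L.map σ = g₀ * k₀ by
      rw [← hfac, hHL, Polynomial.map_mul, hH_map])
  obtain ⟨K, hK⟩ := hGf
  obtain ⟨K', hK'⟩ := hG'f
  exact (eq_and_eq_of_mul_eq_mul_of_map_eq hker hπ hcop hG hG' hG_map hG'_map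
    (cofactor_map hG_map hK) (cofactor_map hG'_map hK') (hK.symm.trans hK')).1

end Polynomial

end HenselLifting

theorem stmt1 (p : ℕ) [Fact p.Prime] (n : ℕ) (hn : 0 < n) (hpn : ¬ p ∣ n)
    (h₁ : Polynomial (ZMod p)) (h₁monic : h₁.Monic) (h₁irr : Irreducible h₁)
    (h₁dvd : h₁ ∣ (X ^ n - 1 : Polynomial (ZMod p))) :
    (∃! h : Polynomial ℤ_[p], h.Monic ∧ h ∣ (X ^ n - 1) ∧
        h.map (PadicInt.toZMod (p := p)) = h₁) ∧
    (∀ h : Polynomial ℤ_[p], h.Monic → h ∣ (X ^ n - 1) →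
        h.map (PadicInt.toZMod (p := p)) = h₁ → Irreducible h) := by
  have : IsAdicComplete (Ideal.span {(p : ℤ_[p])}) ℤ_[p] := by
    rw [← PadicInt.maximalIdeal_eq_span_p]; infer_instance
  have hker : RingHom.ker (PadicInt.toZMod (p := p)) = Ideal.span {(p : ℤ_[p])} :=
    PadicInt.ker_toZMod.trans PadicInt.maximalIdeal_eq_span_p
  have hp : (p : ℤ_[p]) ≠ 0 := Nat.cast_ne_zero.2 (Fact.out : p.Prime).ne_zero
  have hf : (X ^ n - 1 : ℤ_[p][X]).Monic := by
    simpa only [map_one] using monic_X_pow_sub_C (1 : ℤ_[p]) hn.ne'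
  obtain ⟨k₁, hk₁⟩ := h₁dvd
  have hfac : (X ^ n - 1 : ℤ_[p][X]).map PadicInt.toZMod = h₁ * k₁ := by
    rw [← hk₁, Polynomial.map_sub, Polynomial.map_pow, map_X, Polynomial.map_one]
  have hcop : IsCoprime h₁ k₁ :=
    (hk₁ ▸ X_pow_sub_one_separable_iff.2 (by rwa [Ne, ZMod.natCast_eq_zero_iff])).isCoprime
  obtain ⟨G, K, hG, -, hG_map, -, hGK⟩ := exists_monic_lift_of_map_eq_mul_s1
    (ZMod.ringHom_surjective _) hker hp hf h₁monic
    (h₁monic.of_mul_monic_left (hfac ▸ hf.map PadicInt.toZMod)) hcop hfac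
  refine ⟨⟨G, ⟨hG, ⟨K, hGK⟩, hG_map⟩, fun h ⟨hh, hh_dvd, hh_map⟩ =>
    eq_of_dvd_of_map_eq hker hp hcop hfac hh hG hh_map hG_map hh_dvd ⟨K, hGK⟩⟩, ?_⟩
  intro h hh _ hh_map
  exact hh.irreducible_of_irreducible_map _ _ (hh_map ▸ h₁irr)
end

section
/- An ideal P of R_∞ is prime if and only if there exists a basic irreducible divisor h of X^n − 1 over ℤ_p such that either P is the principal ideal of R_∞ generated by h̄, or P is the ideal generated by h̄ and the image of the constant polynomial p. Moreover, P is a maximal ideal of R_∞ if and only if P is of the second form, i.e. P is generated by h̄ and p for some basic irreducible divisor h. -/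
open Polynomial

/-- The quotient ring `ℤ_p[X]/(X^n - 1)`. -/
abbrev RquotP (p n : ℕ) [Fact p.Prime] :=
  Polynomial ℤ_[p] ⧸ Ideal.span {(X : Polynomial ℤ_[p]) ^ n - 1}

/-- The natural quotient map `ℤ_p[X] → ℤ_p[X]/(X^n - 1)`. -/
noncomputable abbrev pmk (p n : ℕ) [Fact p.Prime] : Polynomial ℤ_[p] →+* RquotP p n :=
  Ideal.Quotient.mk _

/-- A basic irreducible divisor of `X^n - 1` over `ℤ_p`: a monic divisor of `X^n - 1`
whose coefficientwise reduction modulo `p` is irreducible. -/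
def BasicIrrP (p n : ℕ) [Fact p.Prime] (h : Polynomial ℤ_[p]) : Prop :=
  h.Monic ∧ h ∣ (X ^ n - 1) ∧ Irreducible (h.map (PadicInt.toZMod (p := p)))

/-!
Primes of `ℤ_p[X]/(X^n - 1)` are the primes `Q` of `ℤ_p[X]` containing `X^n - 1`. As `p ∤ n`,
`X^n - 1` is squarefree mod `p`, and Hensel's lemma lifts its factorisation mod `p` to a
factorisation over `ℤ_p` into basic irreducibles, one of which, `h`, lies in `Q`. The ideal `(h)`
is prime and `(h, p)` is maximal, with quotient `𝔽_p[X]/(h̄)`. If `p ∈ Q` then `Q = (h, p)`;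
otherwise `Q ∩ ℤ_p = 0`, and since `ℤ_p[X]/(h)` is a domain integral over `ℤ_p`, `Q = (h)`.

Hensel's lemma: if `f̄ = A B` with `A`, `B` coprime, the idempotent of
`𝔽_p[X]/(A B) ≅ 𝔽_p[X]/(A) × 𝔽_p[X]/(B)` lifts to `ℤ_p[X]/(f)`, which is finite over `ℤ_p` and
hence `p`-adically complete. The lifted idempotent splits `ℤ_p[X]/(f)` into two free summands
stable under multiplication by `X`, and the characteristic polynomial `f` of that multiplication
factors accordingly.
-/

section AdicComplete

variable {R M : Type*} [CommRing R] [AddCommGroup M] [Module R M] (I : Ideal R)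

theorem IsPrecomplete.of_finite [IsPrecomplete I R] [Module.Finite R M] : IsPrecomplete I M := by
  rw [← AdicCompletion.of_surjective_iff]
  intro y
  obtain ⟨t, rfl⟩ := AdicCompletion.ofTensorProduct_surjective_of_finite I M y
  induction t using TensorProduct.induction_on with
  | zero => exact ⟨0, by simp⟩
  | tmul r x =>
    obtain ⟨s, rfl⟩ := AdicCompletion.of_surjective I R r
    refine ⟨s • x, ?_⟩
    have hs := AdicCompletion.algebraMap_apply (S := R) I s
    rw [Algebra.algebraMap_self, RingHom.id_apply] at hs
    rw [AdicCompletion.ofTensorProduct_tmul, map_smul, ← hs, algebraMap_smul]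
  | add t t' ht ht' =>
    obtain ⟨x, hx⟩ := ht
    obtain ⟨x', hx'⟩ := ht'
    exact ⟨x + x', by rw [map_add, map_add, hx, hx']⟩

theorem IsAdicComplete.of_finite [IsNoetherianRing R] [IsAdicComplete I R] [Module.Finite R M] :
    IsAdicComplete I M :=
  (isAdicComplete_iff I M).mpr
    ⟨.of_le_jacobson I M (IsAdicComplete.le_jacobson_bot I), .of_finite I⟩

theorem IsAdicComplete.map_algebraMap_of_finite {S : Type*} [CommRing S] [Algebra R S]
    [IsNoetherianRing R] [IsAdicComplete I R] [Module.Finite R S] :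
    IsAdicComplete (I.map (algebraMap R S)) S :=
  (IsAdicComplete.map_algebraMap_iff I S).mpr (.of_finite I)

end AdicComplete

theorem HenselianRing.exists_isIdempotentElem_eq {O O' : Type*} [CommRing O] [CommRing O']
    {ψ : O →+* O'} (hψ : Function.Surjective ψ) [HenselianRing O (RingHom.ker ψ)] {ε : O'}
    (hε : IsIdempotentElem ε) : ∃ e : O, IsIdempotentElem e ∧ ψ e = ε := by
  obtain ⟨e₀, rfl⟩ := hψ ε
  have hmonic : (X ^ 2 - X : O[X]).Monic :=
    monic_X_pow_sub (by simpa only [Nat.cast_ofNat] using degree_X_le.trans_lt (by norm_num))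
  have hroot : (X ^ 2 - X : O[X]).eval e₀ ∈ RingHom.ker ψ := by
    simpa only [sq, eval_sub, eval_mul, eval_X, RingHom.mem_ker, map_sub, map_mul, sub_eq_zero]
      using hε.eq
  -- `(2 e₀ - 1) ^ 2 = 1 + 4 (e₀ ^ 2 - e₀)`, so `e₀` is a simple root of `X ^ 2 - X` mod the kernel
  have hsimple : IsUnit (Ideal.Quotient.mk (RingHom.ker ψ)
      ((X ^ 2 - X : O[X]).derivative.eval e₀)) := by
    have hder : (X ^ 2 - X : O[X]).derivative.eval e₀ = 2 * e₀ - 1 := by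
      simp only [derivative_sub, derivative_X_pow, derivative_X, eval_sub, eval_mul, eval_C,
        eval_pow, eval_X, eval_one]
      norm_num
    rw [hder]
    refine IsUnit.of_mul_eq_one (Ideal.Quotient.mk _ (2 * e₀ - 1)) ?_
    rw [← map_mul, ← map_one (Ideal.Quotient.mk _), Ideal.Quotient.mk_eq_mk_iff_sub_mem]
    convert (RingHom.ker ψ).mul_mem_left 4 hroot using 1
    simp only [eval_sub, eval_pow, eval_X]
    ring
  obtain ⟨e, he, hee₀⟩ := HenselianRing.is_henselian _ hmonic e₀ hroot hsimple
  refine ⟨e, ?_, ?_⟩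
  · simpa only [IsIdempotentElem, sq, IsRoot.def, eval_sub, eval_mul, eval_X, sub_eq_zero] using he
  · rwa [RingHom.mem_ker, map_sub, sub_eq_zero] at hee₀

section Charpoly

variable {R M : Type*} [CommRing R] [IsDomain R] [IsPrincipalIdealRing R]
  [AddCommGroup M] [Module R M] [Module.Free R M] [Module.Finite R M]

theorem LinearMap.exists_charpoly_eq_mul_of_commute {φ E : Module.End R M}
    (hE : IsIdempotentElem E) (hφE : Commute φ E) :
    ∃ a b : R[X], a.Monic ∧ b.Monic ∧ φ.charpoly = a * b ∧
      a.natDegree = Module.finrank R (LinearMap.range E) ∧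
      b.natDegree = Module.finrank R (LinearMap.ker E) := by
  have h₁ : ∀ x ∈ LinearMap.range E, φ x ∈ LinearMap.range E := by
    rintro _ ⟨y, rfl⟩
    exact ⟨φ y, (LinearMap.congr_fun hφE y).symm⟩
  have h₂ : ∀ x ∈ LinearMap.ker E, φ x ∈ LinearMap.ker E := by
    intro x hx
    rw [LinearMap.mem_ker] at hx ⊢
    rw [← Module.End.mul_apply, ← hφE.eq, Module.End.mul_apply, hx, map_zero]
  set e := Submodule.prodEquivOfIsCompl _ _ (LinearMap.IsIdempotentElem.isCompl hE)
  have hconj : e.symm.conj φ = (φ.restrict h₁).prodMap (φ.restrict h₂) := by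
    apply LinearMap.prod_ext
    · ext x <;> simp [e, LinearEquiv.conj_apply, h₁ _ x.2]
    · ext x <;> simp [e, LinearEquiv.conj_apply, h₂ _ x.2]
  refine ⟨(φ.restrict h₁).charpoly, (φ.restrict h₂).charpoly, LinearMap.charpoly_monic _,
    LinearMap.charpoly_monic _, ?_, LinearMap.charpoly_natDegree _, LinearMap.charpoly_natDegree _⟩
  rw [← e.symm.charpoly_conj φ, hconj, LinearMap.charpoly_prodMap]

end Charpoly

namespace AdjoinRoot

variable {R : Type*} [CommRing R] {f : R[X]}

theorem charpoly_lmul_root [Nontrivial R] (hf : f.Monic) [Module.Free R (AdjoinRoot f)]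
    [Module.Finite R (AdjoinRoot f)] : (Algebra.lmul R (AdjoinRoot f) (root f)).charpoly = f := by
  refine eq_of_monic_of_dvd_of_natDegree_le hf (LinearMap.charpoly_monic _) ?_ ?_
  · rw [← mk_eq_zero, ← aeval_eq, Algebra.aeval_self_charpoly_lmul]
  · rw [LinearMap.charpoly_natDegree, (powerBasis' hf).finrank, powerBasis'_dim]

theorem exists_monic_mul_eq_of_isIdempotentElem [IsDomain R] [IsPrincipalIdealRing R]
    (hf : f.Monic) {e : AdjoinRoot f} (he : IsIdempotentElem e) (he₀ : e ≠ 0) (he₁ : e ≠ 1) :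
    ∃ a b : R[X], a.Monic ∧ b.Monic ∧ f = a * b ∧ 0 < a.natDegree ∧ 0 < b.natDegree := by
  have := hf.free_adjoinRoot
  have := hf.finite_adjoinRoot
  set E := Algebra.lmul R (AdjoinRoot f) e
  obtain ⟨a, b, ha, hb, hab, hda, hdb⟩ := LinearMap.exists_charpoly_eq_mul_of_commute
    (he.map (Algebra.lmul R (AdjoinRoot f))) ((Commute.all (root f) e).map (Algebra.lmul R _))
  rw [charpoly_lmul_root hf] at hab
  refine ⟨a, b, ha, hb, hab, ?_, ?_⟩
  · rw [hda, Nat.pos_iff_ne_zero, Ne, Submodule.finrank_eq_zero, LinearMap.range_eq_bot]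
    intro hE
    exact he₀ (by simpa [E] using LinearMap.congr_fun hE 1)
  · rw [hdb, Nat.pos_iff_ne_zero, Ne, Submodule.finrank_eq_zero, LinearMap.ker_eq_bot]
    intro hE
    refine he₁ (sub_eq_zero.mp (hE (a₂ := 0) ?_)).symm
    simp [mul_sub, he.eq]

variable {S : Type*} [CommRing S]

theorem map_mk (φ : R →+* S) (q : S[X]) (h : q ∣ f.map φ) (g : R[X]) :
    map φ f q h (mk f g) = mk q (g.map φ) := by
  rw [map, lift_mk, ← eval₂_map, ← algebraMap_eq, ← aeval_def, aeval_eq]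

theorem ker_map_of_surjective {φ : R →+* S} (hφ : Function.Surjective φ) :
    RingHom.ker (map φ f (f.map φ) dvd_rfl) =
      (RingHom.ker φ).map (algebraMap R (AdjoinRoot f)) := by
  ext x
  obtain ⟨g, rfl⟩ := mk_surjective x
  have hspan : Ideal.span {mapRingHom φ f} = (Ideal.span {f}).map (mapRingHom φ) := by
    rw [Ideal.map_span, Set.image_singleton]
  have hmk : RingHom.ker (mk f) = Ideal.span {f} := Ideal.mk_ker
  rw [RingHom.mem_ker, map_mk, mk_eq_zero, ← Ideal.mem_span_singleton, ← coe_mapRingHom,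
    ← Ideal.mem_comap, hspan, Ideal.comap_map_of_surjective' _ (map_surjective φ hφ),
    ker_mapRingHom, algebraMap_eq, of, ← Ideal.map_map, ← Ideal.mem_comap,
    Ideal.comap_map_of_surjective' _ mk_surjective, hmk, sup_comm]

end AdjoinRoot

section Hensel

variable {R S : Type*} [CommRing R] [IsDomain R] [IsPrincipalIdealRing R] [CommRing S]
  {φ : R →+* S} (hφ : Function.Surjective φ) [IsAdicComplete (RingHom.ker φ) R]
include hφ

theorem Polynomial.Monic.exists_monic_mul_eq_of_map_eq_mul {f : R[X]} (hf : f.Monic)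
    {A B : S[X]} (hAB : f.map φ = A * B) (hcop : IsCoprime A B) (hA : ¬IsUnit A)
    (hB : ¬IsUnit B) :
    ∃ a b : R[X], a.Monic ∧ b.Monic ∧ f = a * b ∧ 0 < a.natDegree ∧ 0 < b.natDegree := by
  obtain ⟨u, v, huv⟩ := hcop
  set red := AdjoinRoot.map φ f (f.map φ) dvd_rfl
  have := hf.finite_adjoinRoot
  have : IsAdicComplete (RingHom.ker red) (AdjoinRoot f) := by
    rw [AdjoinRoot.ker_map_of_surjective hφ]
    exact .map_algebraMap_of_finite _
  have hred : Function.Surjective red := by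
    intro y
    obtain ⟨g, rfl⟩ := AdjoinRoot.mk_surjective y
    obtain ⟨g, rfl⟩ := map_surjective φ hφ g
    exact ⟨AdjoinRoot.mk f g, AdjoinRoot.map_mk _ _ _ _⟩
  -- `v * B` is `1` mod `A` and `0` mod `B`
  have hε : IsIdempotentElem (AdjoinRoot.mk (f.map φ) (v * B)) := by
    rw [IsIdempotentElem, ← map_mul, ← sub_eq_zero, ← map_sub, AdjoinRoot.mk_eq_zero, hAB]
    exact ⟨-(u * v), by linear_combination (v * B) * huv⟩
  obtain ⟨e, he, hred_e⟩ := HenselianRing.exists_isIdempotentElem_eq hred hε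
  refine AdjoinRoot.exists_monic_mul_eq_of_isIdempotentElem hf he ?_ ?_
  · rintro rfl
    rw [map_zero, eq_comm, AdjoinRoot.mk_eq_zero, hAB] at hred_e
    have hAvB : A ∣ v * B := (dvd_mul_right A B).trans hred_e
    exact hA (isUnit_of_dvd_one (huv ▸ dvd_add (dvd_mul_left A u) hAvB))
  · rintro rfl
    rw [map_one, ← map_one (AdjoinRoot.mk _), eq_comm, ← sub_eq_zero, ← map_sub,
      AdjoinRoot.mk_eq_zero, hAB] at hred_e
    have hBvB : B ∣ v * B - 1 := (dvd_mul_left B A).trans hred_e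
    exact hB (isUnit_of_dvd_one (sub_sub_cancel (v * B) 1 ▸ dvd_sub (dvd_mul_left B v) hBvB))

end Hensel

section Factor

variable {R k : Type*} [CommRing R] [IsDomain R] [IsPrincipalIdealRing R] [Field k]
  {φ : R →+* k} (hφ : Function.Surjective φ) [IsAdicComplete (RingHom.ker φ) R]
include hφ

theorem Polynomial.Monic.exists_dvd_irreducible_map_mem {Q : Ideal R[X]} [Q.IsPrime] {f : R[X]}
    (hf : f.Monic) (hsq : Squarefree (f.map φ)) (hfQ : f ∈ Q) :
    ∃ g : R[X], g.Monic ∧ g ∣ f ∧ Irreducible (g.map φ) ∧ g ∈ Q := by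
  induction hd : f.natDegree using Nat.strong_induction_on generalizing f with
  | _ d ih =>
  by_cases hirr : Irreducible (f.map φ)
  · exact ⟨f, hf, dvd_rfl, hirr, hfQ⟩
  have hunit : ¬IsUnit (f.map φ) := by
    intro hu
    have hf1 := hf.natDegree_eq_zero.mp
      ((hf.natDegree_map φ).symm.trans (natDegree_eq_zero_of_isUnit hu))
    exact Ideal.IsPrime.ne_top ‹_› ((Ideal.eq_top_iff_one Q).mpr (hf1 ▸ hfQ))
  obtain ⟨A, B, hAB, hA, hB⟩ : ∃ A B : k[X], f.map φ = A * B ∧ ¬IsUnit A ∧ ¬IsUnit B := by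
    simpa [irreducible_iff, hunit] using hirr
  obtain ⟨a, b, ha, hb, rfl, hda, hdb⟩ := hf.exists_monic_mul_eq_of_map_eq_mul hφ hAB
    (squarefree_mul_iff.mp (hAB ▸ hsq)).1.isCoprime hA hB
  rw [Polynomial.map_mul] at hsq
  have hd' := ha.natDegree_mul hb
  rcases Ideal.IsPrime.mem_or_mem ‹_› hfQ with haQ | hbQ
  · obtain ⟨g, hg, hga, hgirr, hgQ⟩ := ih _ (by omega) ha hsq.of_mul_left haQ rfl
    exact ⟨g, hg, hga.mul_right b, hgirr, hgQ⟩
  · obtain ⟨g, hg, hgb, hgirr, hgQ⟩ := ih _ (by omega) hb hsq.of_mul_right hbQ rfl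
    exact ⟨g, hg, hgb.mul_left a, hgirr, hgQ⟩

end Factor

namespace Polynomial

variable {R : Type*} [CommRing R]

theorem Monic.isPrime_span_singleton_of_irreducible_map [IsDomain R]
    [UniqueFactorizationMonoid R] {S : Type*} [CommRing S] [IsDomain S] (φ : R →+* S)
    {h : R[X]} (hh : h.Monic) (hirr : Irreducible (h.map φ)) : (Ideal.span {h}).IsPrime :=
  (Ideal.span_singleton_prime hh.ne_zero).mpr (hh.irreducible_of_irreducible_map φ h hirr).prime

theorem isMaximal_span_singleton_sup_map_C_ker {k : Type*} [Field k] {φ : R →+* k}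
    (hφ : Function.Surjective φ) {h : R[X]} (hirr : Irreducible (h.map φ)) :
    (Ideal.span {h} ⊔ (RingHom.ker φ).map C).IsMaximal := by
  have := PrincipalIdealRing.isMaximal_of_irreducible hirr
  have hmax := Ideal.comap_isMaximal_of_surjective (mapRingHom φ) (map_surjective φ hφ)
    (K := Ideal.span {h.map φ})
  rwa [← coe_mapRingHom, ← Set.image_singleton, ← Ideal.map_span,
    Ideal.comap_map_of_surjective' _ (map_surjective φ hφ), ker_mapRingHom] at hmax

-- `R[X]/(h)` is a domain integral over `R`, so its nonzero ideals meet `R`.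
theorem Monic.eq_span_singleton_of_comap_C_eq_bot [IsDomain R] {h : R[X]} (hh : h.Monic)
    [(Ideal.span {h}).IsPrime] {Q : Ideal R[X]} (hhQ : h ∈ Q) (hQ : Q.comap C = ⊥) :
    Q = Ideal.span {h} := by
  have := hh.finite_adjoinRoot
  have : IsDomain (AdjoinRoot h) := Ideal.Quotient.isDomain (Ideal.span {h})
  have hker : RingHom.ker (AdjoinRoot.mk h) = Ideal.span {h} := Ideal.mk_ker
  have hle : RingHom.ker (AdjoinRoot.mk h) ≤ Q := by
    rwa [hker, Ideal.span_le, Set.singleton_subset_iff]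
  have hcomap : (Q.map (AdjoinRoot.mk h)).comap (AdjoinRoot.mk h) = Q := by
    rw [Ideal.comap_map_of_surjective' _ AdjoinRoot.mk_surjective, sup_eq_left.mpr hle]
  have hbot : Q.map (AdjoinRoot.mk h) = ⊥ := by
    apply Ideal.eq_bot_of_comap_eq_bot (R := R)
    rw [AdjoinRoot.algebraMap_eq, AdjoinRoot.of, ← Ideal.comap_comap, hcomap, hQ]
  rw [← hcomap, hbot, ← hker]
  rfl

end Polynomial

namespace Ideal

variable {R S : Type*} [CommRing R] [CommRing S] {f : R →+* S} (hf : Function.Surjective f)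
include hf

theorem isPrime_comap_iff_of_surjective {P : Ideal S} : (P.comap f).IsPrime ↔ P.IsPrime :=
  ⟨fun _ => map_comap_of_surjective f hf P ▸ map_isPrime_of_surjective hf (ker_le_comap f),
    fun _ => comap_isPrime f P⟩

theorem isMaximal_comap_iff_of_surjective {P : Ideal S} :
    (P.comap f).IsMaximal ↔ P.IsMaximal := by
  refine ⟨fun hP => ?_, fun _ => comap_isMaximal_of_surjective f hf⟩
  rcases map_eq_top_or_isMaximal_of_surjective f hf hP with htop | hmax
  · rw [map_comap_of_surjective f hf] at htop
    exact absurd (by rw [htop, comap_top]) hP.ne_top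
  · rwa [map_comap_of_surjective f hf] at hmax

theorem eq_map_iff_comap_eq {P : Ideal S} {J : Ideal R} (hJ : RingHom.ker f ≤ J) :
    P = J.map f ↔ P.comap f = J := by
  constructor
  · rintro rfl
    rw [comap_map_of_surjective' f hf, sup_eq_left.mpr hJ]
  · rintro rfl
    exact (map_comap_of_surjective f hf P).symm

end Ideal

namespace PadicInt

variable {p : ℕ} [Fact p.Prime]

theorem toZMod_surjective : Function.Surjective (toZMod : ℤ_[p] →+* ZMod p) :=
  ZMod.ringHom_surjective _

instance : IsAdicComplete (RingHom.ker (toZMod : ℤ_[p] →+* ZMod p)) ℤ_[p] := by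
  rw [ker_toZMod]
  infer_instance

theorem eq_bot_of_natCast_notMem {J : Ideal ℤ_[p]} [J.IsPrime] (hp : (p : ℤ_[p]) ∉ J) :
    J = ⊥ := by
  by_contra hJ
  refine hp ?_
  rw [IsLocalRing.eq_maximalIdeal (Ideal.IsPrime.isMaximal ‹_› hJ), maximalIdeal_eq_span_p]
  exact Ideal.mem_span_singleton_self _

theorem span_insert_C_eq_sup (h : ℤ_[p][X]) :
    Ideal.span {h, C (p : ℤ_[p])} = Ideal.span {h} ⊔ (RingHom.ker toZMod).map C := by
  rw [ker_toZMod, maximalIdeal_eq_span_p, Ideal.map_span, Set.image_singleton, Ideal.span_insert]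

theorem isMaximal_span_insert_C {h : ℤ_[p][X]} (hirr : Irreducible (h.map toZMod)) :
    (Ideal.span {h, C (p : ℤ_[p])}).IsMaximal := by
  rw [span_insert_C_eq_sup]
  exact isMaximal_span_singleton_sup_map_C_ker toZMod_surjective hirr

theorem C_natCast_notMem_span_singleton {h : ℤ_[p][X]} (hh : h.Monic)
    (hirr : Irreducible (h.map toZMod)) : C (p : ℤ_[p]) ∉ Ideal.span {h} := by
  intro hmem
  have hdeg := natDegree_le_of_dvd (Ideal.mem_span_singleton.mp hmem)
    (C_ne_zero.mpr (Nat.cast_ne_zero.mpr (Fact.out : p.Prime).ne_zero))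
  rw [natDegree_C, ← hh.natDegree_map toZMod] at hdeg
  exact hirr.natDegree_pos.ne' (Nat.le_zero.mp hdeg)

variable {n : ℕ}

theorem squarefree_map_X_pow_sub_one (hpn : ¬p ∣ n) :
    Squarefree ((X ^ n - 1 : ℤ_[p][X]).map toZMod) := by
  have hn : (n : ZMod p) ≠ 0 := by rwa [Ne, ZMod.natCast_eq_zero_iff]
  simpa using (separable_X_pow_sub_C (1 : ZMod p) hn one_ne_zero).squarefree

theorem exists_basicIrrP_mem (hn : 0 < n) (hpn : ¬p ∣ n) {Q : Ideal ℤ_[p][X]} [Q.IsPrime]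
    (hQ : X ^ n - 1 ∈ Q) : ∃ h, BasicIrrP p n h ∧ h ∈ Q := by
  have hmonic : (X ^ n - 1 : ℤ_[p][X]).Monic := by
    simpa using monic_X_pow_sub_C (1 : ℤ_[p]) hn.ne'
  obtain ⟨h, hh, hdvd, hirr, hhQ⟩ :=
    hmonic.exists_dvd_irreducible_map_mem toZMod_surjective (squarefree_map_X_pow_sub_one hpn) hQ
  exact ⟨h, ⟨hh, hdvd, hirr⟩, hhQ⟩

theorem isPrime_iff_of_X_pow_sub_one_mem (hn : 0 < n) (hpn : ¬p ∣ n) {Q : Ideal ℤ_[p][X]}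
    (hQ : X ^ n - 1 ∈ Q) :
    Q.IsPrime ↔
      ∃ h, BasicIrrP p n h ∧ (Q = Ideal.span {h} ∨ Q = Ideal.span {h, C (p : ℤ_[p])}) := by
  refine ⟨fun hprime => ?_, ?_⟩
  · obtain ⟨h, hbasic, hhQ⟩ := exists_basicIrrP_mem hn hpn hQ
    refine ⟨h, hbasic, ?_⟩
    by_cases hpQ : C (p : ℤ_[p]) ∈ Q
    · refine .inr ((isMaximal_span_insert_C hbasic.2.2).eq_of_le hprime.ne_top ?_).symm
      rw [Ideal.span_le, Set.insert_subset_iff, Set.singleton_subset_iff]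
      exact ⟨hhQ, hpQ⟩
    · have := hbasic.1.isPrime_span_singleton_of_irreducible_map _ hbasic.2.2
      exact .inl (hbasic.1.eq_span_singleton_of_comap_C_eq_bot hhQ
        (eq_bot_of_natCast_notMem hpQ))
  · rintro ⟨h, ⟨hh, -, hirr⟩, rfl | rfl⟩
    · exact hh.isPrime_span_singleton_of_irreducible_map _ hirr
    · exact (isMaximal_span_insert_C hirr).isPrime

theorem isMaximal_iff_of_X_pow_sub_one_mem (hn : 0 < n) (hpn : ¬p ∣ n) {Q : Ideal ℤ_[p][X]}
    (hQ : X ^ n - 1 ∈ Q) :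
    Q.IsMaximal ↔ ∃ h, BasicIrrP p n h ∧ Q = Ideal.span {h, C (p : ℤ_[p])} := by
  refine ⟨fun hmax => ?_, by rintro ⟨h, ⟨-, -, hirr⟩, rfl⟩; exact isMaximal_span_insert_C hirr⟩
  obtain ⟨h, hbasic, rfl | hQh⟩ := (isPrime_iff_of_X_pow_sub_one_mem hn hpn hQ).mp hmax.isPrime
  · refine absurd ?_ (C_natCast_notMem_span_singleton hbasic.1 hbasic.2.2)
    rw [hmax.eq_of_le (isMaximal_span_insert_C hbasic.2.2).ne_top
      (Ideal.span_mono (Set.singleton_subset_iff.mpr (Set.mem_insert _ _)))]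
    exact Ideal.subset_span (Set.mem_insert_of_mem _ rfl)
  · exact ⟨h, hbasic, hQh⟩

end PadicInt

theorem BasicIrrP.eq_span_image_pmk_iff {p n : ℕ} [Fact p.Prime] {h : ℤ_[p][X]}
    (hh : BasicIrrP p n h) {s : Set ℤ_[p][X]} (hs : h ∈ s) (P : Ideal (RquotP p n)) :
    P = Ideal.span (pmk p n '' s) ↔ P.comap (pmk p n) = Ideal.span s := by
  rw [← Ideal.map_span]
  refine Ideal.eq_map_iff_comap_eq Ideal.Quotient.mk_surjective ?_
  rw [Ideal.mk_ker, Ideal.span_le, Set.singleton_subset_iff]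
  exact Ideal.span_mono (Set.singleton_subset_iff.mpr hs) (Ideal.mem_span_singleton.mpr hh.2.1)

theorem stmt3 (p : ℕ) [Fact p.Prime] (n : ℕ) (hn : 0 < n) (hpn : ¬ p ∣ n)
    (P : Ideal (RquotP p n)) :
    (P.IsPrime ↔ ∃ h : Polynomial ℤ_[p], BasicIrrP p n h ∧
        (P = Ideal.span {pmk p n h} ∨
          P = Ideal.span {pmk p n h, pmk p n (C (p : ℤ_[p]))})) ∧
    (P.IsMaximal ↔ ∃ h : Polynomial ℤ_[p], BasicIrrP p n h ∧
        P = Ideal.span {pmk p n h, pmk p n (C (p : ℤ_[p]))}) := by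
  have hQ : X ^ n - 1 ∈ P.comap (pmk p n) := by
    rw [Ideal.mem_comap, Ideal.Quotient.eq_zero_iff_mem.mpr (Ideal.mem_span_singleton_self _)]
    exact P.zero_mem
  rw [← Ideal.isPrime_comap_iff_of_surjective Ideal.Quotient.mk_surjective,
    ← Ideal.isMaximal_comap_iff_of_surjective Ideal.Quotient.mk_surjective,
    PadicInt.isPrime_iff_of_X_pow_sub_one_mem hn hpn hQ,
    PadicInt.isMaximal_iff_of_X_pow_sub_one_mem hn hpn hQ]
  constructor <;> refine exists_congr fun h => and_congr_right fun hh => ?_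
  · rw [← Set.image_singleton (f := pmk p n), ← Set.image_pair (pmk p n),
      hh.eq_span_image_pmk_iff (Set.mem_singleton h), hh.eq_span_image_pmk_iff (Set.mem_insert _ _)]
  · rw [← Set.image_pair (pmk p n), hh.eq_span_image_pmk_iff (Set.mem_insert _ _)]
end

section
/- For every basic irreducible divisor h of X^n − 1 over ZMod p^a, there exists an element e ∈ R_a with e² = e such that the ideal of R_a generated by e and the image of the constant polynomial p equals the ideal generated by h̄ and the image of p. -/
open Polynomial

/-- The quotient ring `(ZMod p^a)[X]/(X^n - 1)`. -/
abbrev Rquot (p a n : ℕ) :=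
  Polynomial (ZMod (p ^ a)) ⧸ Ideal.span {(X : Polynomial (ZMod (p ^ a))) ^ n - 1}

/-- The natural quotient map `(ZMod p^a)[X] → (ZMod p^a)[X]/(X^n - 1)`. -/
noncomputable abbrev rmk (p a n : ℕ) : Polynomial (ZMod (p ^ a)) →+* Rquot p a n :=
  Ideal.Quotient.mk _

/-- A basic irreducible divisor of `X^n - 1` over `ZMod p^a`: a monic divisor of `X^n - 1`
whose coefficientwise reduction modulo `p` is irreducible. -/
def BasicIrr (p a n : ℕ) [Fact p.Prime] (ha : a ≠ 0) (h : Polynomial (ZMod (p ^ a))) : Prop :=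
  h.Monic ∧ h ∣ (X ^ n - 1) ∧
    Irreducible (h.map (ZMod.castHom (dvd_pow_self p ha) (ZMod p)))

/-!
Write `X^n - 1 = h * g`. Since `p ∤ n`, `X^n - 1` is squarefree mod `p`, so the irreducible
`h mod p` is coprime to `g mod p`. The kernel of reduction mod `p` is nil, so a Bézout identity
mod `p` lifts to one over `ZMod p^a`, and `h`, `g` are coprime. In `R_a` we have `h̄ * ḡ = 0`,
so with `u * h̄ + v * ḡ = 1` the element `e = u * h̄` is idempotent and generates the same
ideal as `h̄`.
-/

theorem ZMod.isNilpotent_of_castHom_eq_zero {p a : ℕ} (ha : a ≠ 0) {c : ZMod (p ^ a)}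
    (hc : ZMod.castHom (dvd_pow_self p ha) (ZMod p) c = 0) : IsNilpotent c := by
  obtain ⟨k, rfl⟩ := ZMod.intCast_surjective c
  rw [map_intCast, ZMod.intCast_zmod_eq_zero_iff_dvd] at hc
  obtain ⟨m, rfl⟩ := hc
  refine ⟨a, ?_⟩
  rw [Int.cast_mul, mul_pow, Int.cast_natCast, ← Nat.cast_pow, ZMod.natCast_self, zero_mul]

theorem Polynomial.isNilpotent_of_map_eq_zero {R S : Type*} [CommRing R] [Semiring S]
    {f : R →+* S} (hf : ∀ x, f x = 0 → IsNilpotent x) {P : R[X]} (hP : P.map f = 0) :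
    IsNilpotent P :=
  Polynomial.isNilpotent_iff.mpr fun i => hf _ <| by rw [← coeff_map, hP, coeff_zero]

theorem IsCoprime.of_map_of_isNilpotent {R S : Type*} [CommRing R] [CommRing S] {f : R →+* S}
    (hsurj : Function.Surjective f) (hf : ∀ x, f x = 0 → IsNilpotent x) {x y : R}
    (h : IsCoprime (f x) (f y)) : IsCoprime x y := by
  obtain ⟨u', v', huv⟩ := h
  obtain ⟨u, rfl⟩ := hsurj u'
  obtain ⟨v, rfl⟩ := hsurj v'
  have hunit : IsUnit (u * x + v * y) := by
    have hnil : IsNilpotent (u * x + v * y - 1) := hf _ <| by simp [huv]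
    simpa using hnil.isUnit_one_add
  obtain ⟨w, hw⟩ := hunit
  refine ⟨↑w⁻¹ * u, ↑w⁻¹ * v, ?_⟩
  rw [mul_assoc, mul_assoc, ← mul_add, ← hw, Units.inv_mul]

theorem Irreducible.isCoprime_of_squarefree_mul {R : Type*} [CommRing R] [IsBezout R]
    {h g : R} (hirr : Irreducible h) (hsq : Squarefree (h * g)) : IsCoprime h g :=
  hirr.coprime_iff_not_dvd.mpr fun hdvd => hirr.not_isUnit <| hsq h (mul_dvd_mul_left h hdvd)

theorem exists_isIdempotentElem_span_eq_of_isCoprime {S : Type*} [CommRing S] {x y : S}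
    (hxy : IsCoprime x y) (hmul : x * y = 0) :
    ∃ e : S, IsIdempotentElem e ∧ Ideal.span {e} = Ideal.span {x} := by
  obtain ⟨u, v, huv⟩ := hxy
  have hx : x * (u * x) = x := by linear_combination x * huv - v * hmul
  refine ⟨u * x, ?_, ?_⟩
  · change u * x * (u * x) = u * x
    linear_combination u * hx
  · refine le_antisymm (Ideal.span_singleton_le_span_singleton.mpr (dvd_mul_left x u))
      (Ideal.span_singleton_le_span_singleton.mpr ⟨x, ?_⟩)
    linear_combination -hx

theorem stmt4_general (p : ℕ) [Fact p.Prime] (a n : ℕ) (ha : 0 < a) (hpn : ¬ p ∣ n)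
    (h : Polynomial (ZMod (p ^ a))) (hh : BasicIrr p a n ha.ne' h) :
    ∃ e : Rquot p a n, e ^ 2 = e ∧
      Ideal.span {e, rmk p a n (C (p : ZMod (p ^ a)))} =
        Ideal.span {rmk p a n h, rmk p a n (C (p : ZMod (p ^ a)))} := by
  obtain ⟨-, ⟨g, hg⟩, hirr⟩ := hh
  set φ := ZMod.castHom (dvd_pow_self p ha.ne') (ZMod p)
  have hsep : ((X : (ZMod p)[X]) ^ n - 1).Separable :=
    X_pow_sub_one_separable_iff.mpr (by simpa [ZMod.natCast_eq_zero_iff] using hpn)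
  have hsq : Squarefree (h.map φ * g.map φ) := by
    rw [← Polynomial.map_mul, ← hg]
    simpa using hsep.squarefree
  have hcop : IsCoprime h g :=
    IsCoprime.of_map_of_isNilpotent (f := mapRingHom φ)
      (map_surjective φ (ZMod.ringHom_surjective φ))
      (fun _ => isNilpotent_of_map_eq_zero fun _ => ZMod.isNilpotent_of_castHom_eq_zero ha.ne')
      (hirr.isCoprime_of_squarefree_mul hsq)
  have hmul : rmk p a n h * rmk p a n g = 0 := by
    rw [← map_mul, ← hg, Ideal.Quotient.eq_zero_iff_mem]
    exact Ideal.mem_span_singleton_self _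
  obtain ⟨e, he, hspan⟩ := exists_isIdempotentElem_span_eq_of_isCoprime (hcop.map _) hmul
  refine ⟨e, (sq e).trans he, ?_⟩
  rw [Ideal.span_insert, hspan, ← Ideal.span_insert]

theorem stmt4 (p : ℕ) [Fact p.Prime] (a n : ℕ) (ha : 0 < a) (hn : 0 < n) (hpn : ¬ p ∣ n)
    (h : Polynomial (ZMod (p ^ a))) (hh : BasicIrr p a n ha.ne' h) :
    ∃ e : Rquot p a n, e ^ 2 = e ∧
      Ideal.span {e, rmk p a n (C (p : ZMod (p ^ a)))} =
        Ideal.span {rmk p a n h, rmk p a n (C (p : ZMod (p ^ a)))} :=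
  stmt4_general p a n ha hpn h hh
end

section
/- For every basic irreducible divisor h of X^n − 1 over ℤ_p, the principal ideal of R_∞ generated by h̄ has an idempotent generator: there exists e ∈ R_∞ with e² = e such that the ideal generated by e equals the ideal generated by h̄. -/
/-!
Write `X ^ n - 1 = h * g`. Since `p ∤ n`, `X ^ n - 1` is separable modulo `p`, so the irreducible
reduction of `h` is coprime to that of `g`. A Bézout relation over `𝔽_p` lifts to `ℤ_p[X]` up to an
error with coefficients in `p ℤ_p`, and `p` lies in the Jacobson radical of `R_∞`, which is finite
over the local ring `ℤ_p`; hence `h` and `g` are coprime in `R_∞`. As `h * g = 0` there, a Bézout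
relation `a * h + b * g = 1` makes `a * h` an idempotent generating `(h)`.
-/

open Polynomial

theorem exists_isIdempotentElem_span_eq_of_isCoprime_of_mul_eq_zero {R : Type*} [CommRing R]
    {x y : R} (hxy : IsCoprime x y) (h0 : x * y = 0) :
    ∃ e : R, IsIdempotentElem e ∧ Ideal.span {e} = Ideal.span {x} := by
  obtain ⟨a, b, hab⟩ := hxy
  refine ⟨a * x, ?_, le_antisymm ?_ ?_⟩
  · unfold IsIdempotentElem
    linear_combination (a * x) * hab - a * b * h0
  · exact Ideal.span_singleton_le_span_singleton.mpr (dvd_mul_left x a)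
  · exact Ideal.span_singleton_le_span_singleton.mpr
      ⟨x, by linear_combination (-x) * hab + b * h0⟩

theorem Irreducible.isCoprime_of_squarefree_mul_s5 {R : Type*} [CommRing R] [IsDomain R]
    [IsBezout R] {x y : R} (hx : Irreducible x) (hxy : Squarefree (x * y)) : IsCoprime x y :=
  hx.coprime_iff_not_dvd.mpr fun hdvd ↦ hx.not_isUnit (hxy x (mul_dvd_mul_left x hdvd))

theorem isCoprime_of_mul_add_mul_sub_one_mem_jacobson {R : Type*} [CommRing R] {x y a b : R}
    (h : a * x + b * y - 1 ∈ Ideal.jacobson ⊥) : IsCoprime x y := by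
  obtain ⟨u, hu⟩ := Ideal.isUnit_of_sub_one_mem_jacobson_bot _ h
  refine ⟨↑u⁻¹ * a, ↑u⁻¹ * b, ?_⟩
  linear_combination (↑u⁻¹ : R) * hu.symm + u.inv_mul

theorem IsCoprime.map_of_map_ker_le_jacobson {A B C : Type*} [CommRing A] [CommRing B]
    [CommRing C] {f : A →+* B} (hf : Function.Surjective f) (g : A →+* C)
    (hfg : (RingHom.ker f).map g ≤ Ideal.jacobson ⊥) {x y : A} (h : IsCoprime (f x) (f y)) :
    IsCoprime (g x) (g y) := by
  obtain ⟨a', b', hab'⟩ := h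
  obtain ⟨a, rfl⟩ := hf a'
  obtain ⟨b, rfl⟩ := hf b'
  have hker : a * x + b * y - 1 ∈ RingHom.ker f := by
    simp only [RingHom.mem_ker, map_sub, map_add, map_mul, hab', map_one, sub_self]
  refine isCoprime_of_mul_add_mul_sub_one_mem_jacobson (a := g a) (b := g b) (hfg ?_)
  simpa using Ideal.mem_map_of_mem g hker

theorem IsLocalRing.map_maximalIdeal_le_jacobson_bot {A B : Type*} [CommRing A]
    [IsLocalRing A] [CommRing B] [Algebra A B] [Algebra.IsIntegral A B] :
    (maximalIdeal A).map (algebraMap A B) ≤ Ideal.jacobson ⊥ := by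
  refine le_sInf fun m ⟨_, hm⟩ ↦ Ideal.map_le_iff_le_comap.mpr ?_
  exact (eq_maximalIdeal (Ideal.isMaximal_comap_of_isIntegral_of_isMaximal m)).ge

theorem Polynomial.Monic.map_ker_mapRingHom_le_jacobson {A K : Type*} [CommRing A]
    [IsLocalRing A] [CommRing K] {φ : A →+* K} (hφ : RingHom.ker φ ≤ IsLocalRing.maximalIdeal A)
    {f : A[X]} (hf : f.Monic) :
    (RingHom.ker (mapRingHom φ)).map (Ideal.Quotient.mk (Ideal.span {f})) ≤ Ideal.jacobson ⊥ := by
  have := hf.finite_quotient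
  rw [ker_mapRingHom, Ideal.map_map]
  exact (Ideal.map_mono hφ).trans IsLocalRing.map_maximalIdeal_le_jacobson_bot

theorem stmt5 (p : ℕ) [Fact p.Prime] (n : ℕ) (hn : 0 < n) (hpn : ¬ p ∣ n)
    (h : Polynomial ℤ_[p]) (hh : BasicIrrP p n h) :
    ∃ e : RquotP p n, e ^ 2 = e ∧ Ideal.span {e} = Ideal.span {pmk p n h} := by
  obtain ⟨-, ⟨g, hg⟩, hirr⟩ := hh
  have hsep : (X ^ n - C 1 : (ZMod p)[X]).Separable :=
    separable_X_pow_sub_C' p n 1 hpn one_ne_zero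
  have hcop : IsCoprime (h.map PadicInt.toZMod) (g.map PadicInt.toZMod) := by
    refine hirr.isCoprime_of_squarefree_mul_s5 ?_
    simpa [← Polynomial.map_mul, ← hg] using hsep.squarefree
  have hmonic : ((X : ℤ_[p][X]) ^ n - 1).Monic := by
    simpa using monic_X_pow_sub_C (1 : ℤ_[p]) hn.ne'
  have hcopR : IsCoprime (pmk p n h) (pmk p n g) :=
    hcop.map_of_map_ker_le_jacobson (map_surjective _ (ZMod.ringHom_surjective _)) _
      (hmonic.map_ker_mapRingHom_le_jacobson PadicInt.ker_toZMod.le)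
  have hzero : pmk p n h * pmk p n g = 0 := by
    rw [← map_mul, ← hg]
    exact Ideal.Quotient.eq_zero_iff_mem.mpr (Ideal.mem_span_singleton_self _)
  obtain ⟨e, he, hspan⟩ :=
    exists_isIdempotentElem_span_eq_of_isCoprime_of_mul_eq_zero hcopR hzero
  exact ⟨e, by rw [sq, he], hspan⟩
end

section
/- Let f₀, f₁, …, f_{a−1} ∈ (ZMod p^a)[X] be monic polynomials dividing X^n − 1 with f_{a−1} | f_{a−2} | ⋯ | f₁ | f₀. Then in R_a the ideal generated by the images of f₀, p·f₁, p²·f₂, …, p^{a−1}·f_{a−1} equals the principal ideal generated by the image of the single polynomial f₀ + p·f₁ + p²·f₂ + ⋯ + p^{a−1}·f_{a−1}. -/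
/-!
Let `I` be an ideal of a commutative ring containing `w` and `g = ∑_{i<a} p^i f_i`, where
`p^a = 0`, `f_{a-1} ∣ ⋯ ∣ f_0 ∣ w` and every factorisation `w = A B` is coprime (for
`w = X^n - 1` over `ZMod p^a` this is separability, `n` being a unit). Then `p^k f_k ∈ I`, by
downward induction on `k`: once every `p^e f_e` with `e > k` lies in `I`, so does every `p^e f_i`
with `i ≤ e`, and modulo these `p^k g ≡ p^k f_0`. To pass from `f_j` to `f_{j+1}`, write
`w = f_j h` with `u f_j + v h = 1`: since `h f_i ≡ 0 mod w` for `i ≤ j`, we get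
`h p^{k-j-1} g ≡ h p^k f_{j+1}`, and `p^k f_{j+1} = u f_{j+1} · p^k f_j + v · h p^k f_{j+1}`.
Taking `I` to be the preimage of `(g)` in `R_a`, where `w = 0`, gives the theorem.
-/

open Polynomial Finset

theorem mem_of_sum_mem_of_forall_ne_mem {G S ι : Type*} [AddCommGroup G] [SetLike S G]
    [AddSubgroupClass S G] [DecidableEq ι] {H : S} {s : Finset ι} {x : ι → G} {j : ι}
    (hj : j ∈ s) (hsum : ∑ i ∈ s, x i ∈ H) (hx : ∀ i ∈ s, i ≠ j → x i ∈ H) : x j ∈ H := by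
  rw [← add_sum_erase s x hj] at hsum
  exact (add_mem_cancel_right
    (sum_mem fun i hi => hx i (mem_of_mem_erase hi) (ne_of_mem_erase hi))).mp hsum

section ChainSum

variable {R : Type*} [CommRing R] {I : Ideal R} {p w : R} {a : ℕ} {f : ℕ → R}

theorem pow_mul_mem_of_higher_mem (hw : ∀ A B, A * B = w → IsCoprime A B)
    (hdvd : ∀ i < a, f i ∣ w) (hchain : ∀ i j, i ≤ j → j < a → f j ∣ f i)
    (hg : ∑ i ∈ range a, p ^ i * f i ∈ I) (hwI : w ∈ I) {k : ℕ} (hk : k < a)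
    (hhigher : ∀ e i, k < e → i ≤ e → p ^ e * f i ∈ I) : ∀ j ≤ k, p ^ k * f j ∈ I := by
  intro j hj
  induction j with
  | zero =>
    have := mem_of_sum_mem_of_forall_ne_mem (H := I) (x := fun i => p ^ (k + i) * f i)
      (mem_range.2 (k.zero_le.trans_lt hk))
      (by simpa only [mul_sum, pow_add, mul_assoc] using I.mul_mem_left (p ^ k) hg)
      (fun i _ hi => hhigher (k + i) i (by omega) (by omega))
    simpa using this
  | succ j ih =>
    obtain ⟨h, hfh⟩ := hdvd j (by omega)
    obtain ⟨u, v, huv⟩ := hw _ _ hfh.symm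
    have hh : h * (p ^ k * f (j + 1)) ∈ I := by
      have := mem_of_sum_mem_of_forall_ne_mem (H := I)
        (x := fun i => h * (p ^ (k - (j + 1) + i) * f i)) (mem_range.2 (by omega : j + 1 < a))
        (by simpa only [mul_sum, pow_add, mul_assoc]
          using I.mul_mem_left (h * p ^ (k - (j + 1))) hg) ?_
      · simpa only [Nat.sub_add_cancel hj] using this
      intro i _ hij
      rcases le_or_gt i j with hle | hgt
      · obtain ⟨c, hc⟩ := hchain i j hle (by omega)
        exact I.mem_of_dvd ⟨p ^ (k - (j + 1) + i) * c, by rw [hc, hfh]; ring⟩ hwI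
      · exact I.mul_mem_left h (hhigher _ i (by omega) (by omega))
    have hsplit : p ^ k * f (j + 1) =
        u * f (j + 1) * (p ^ k * f j) + v * (h * (p ^ k * f (j + 1))) := by
      linear_combination (-(p ^ k * f (j + 1))) * huv
    rw [hsplit]
    exact add_mem (I.mul_mem_left _ (ih (by omega))) (I.mul_mem_left _ hh)

theorem pow_mul_mem_of_sum_mem (hp : p ^ a = 0) (hw : ∀ A B, A * B = w → IsCoprime A B)
    (hdvd : ∀ i < a, f i ∣ w) (hchain : ∀ i j, i ≤ j → j < a → f j ∣ f i)
    (hg : ∑ i ∈ range a, p ^ i * f i ∈ I) (hwI : w ∈ I) (k : ℕ) : p ^ k * f k ∈ I := by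
  have hvanish : ∀ e x, a ≤ e → p ^ e * x ∈ I := fun e x hae => by
    rw [pow_eq_zero_of_le hae hp, zero_mul]; exact I.zero_mem
  induction k using Nat.strong_decreasing_induction with
  | base => exact ⟨a, fun m hm => hvanish m _ hm.le⟩
  | step k ih =>
    rcases le_or_gt a k with hak | hka
    · exact hvanish k _ hak
    refine pow_mul_mem_of_higher_mem hw hdvd hchain hg hwI hka (fun e i hke hie => ?_) k le_rfl
    rcases le_or_gt a e with hae | hea
    · exact hvanish e _ hae
    · exact I.mem_of_dvd (mul_dvd_mul_left _ (hchain i e hie hea)) (ih e hke)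

end ChainSum

theorem separable_X_pow_sub_one_zmod_prime_pow {p : ℕ} [hp : Fact p.Prime] (a : ℕ) {n : ℕ}
    (hpn : ¬ p ∣ n) : ((X : (ZMod (p ^ a))[X]) ^ n - 1).Separable := by
  have hn : IsUnit (n : ZMod (p ^ a)) := (ZMod.isUnit_iff_coprime n (p ^ a)).2
    ((Nat.coprime_comm.1 ((Nat.Prime.coprime_iff_not_dvd hp.out).2 hpn)).pow_right a)
  simpa using separable_X_pow_sub_C_unit 1 hn

theorem stmt14_general (p : ℕ) [Fact p.Prime] (a n : ℕ) (hpn : ¬ p ∣ n)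
    (f : Fin a → Polynomial (ZMod (p ^ a)))
    (hdvd : ∀ i, f i ∣ (X ^ n - 1))
    (hchain : ∀ i j : Fin a, i ≤ j → f j ∣ f i) :
    Ideal.span (Set.range fun i : Fin a =>
        rmk p a n (C ((p : ZMod (p ^ a)) ^ (i : ℕ)) * f i)) =
      Ideal.span {rmk p a n (∑ i : Fin a, C ((p : ZMod (p ^ a)) ^ (i : ℕ)) * f i)} := by
  set g := ∑ i : Fin a, C ((p : ZMod (p ^ a)) ^ (i : ℕ)) * f i
  set F : ℕ → (ZMod (p ^ a))[X] := fun k => if hk : k < a then f ⟨k, hk⟩ else 0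
  have hF : ∀ i (hi : i < a), F i = f ⟨i, hi⟩ := fun i hi => dif_pos hi
  have hpa : C (p : ZMod (p ^ a)) ^ a = 0 := by
    rw [← C_pow, ← Nat.cast_pow, ZMod.natCast_self, C_0]
  have hgF : g = ∑ i ∈ range a, C (p : ZMod (p ^ a)) ^ i * F i := by
    rw [← Fin.sum_univ_eq_sum_range]
    exact sum_congr rfl fun i _ => by rw [hF i i.2, C_pow]
  refine le_antisymm (Ideal.span_le.2 ?_) ((Ideal.span_singleton_le_iff_mem _).2 ?_)
  · rintro _ ⟨i, rfl⟩
    have := pow_mul_mem_of_sum_mem (I := Ideal.comap (rmk p a n) (Ideal.span {rmk p a n g}))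
      hpa (fun A B h => (h ▸ separable_X_pow_sub_one_zmod_prime_pow a hpn).isCoprime)
      (fun i hi => hF i hi ▸ hdvd _)
      (fun i j hij hj => by rw [hF i (hij.trans_lt hj), hF j hj]; exact hchain _ _ hij)
      (hgF ▸ Ideal.mem_comap.2 (Ideal.mem_span_singleton_self _))
      (Ideal.mem_comap.2 (by simp [Ideal.Quotient.eq_zero_iff_mem.2
        (Ideal.mem_span_singleton_self _)]))
      i
    rwa [hF i i.2, ← C_pow] at this
  · rw [map_sum]
    exact Ideal.sum_mem _ fun i _ => Ideal.subset_span ⟨i, rfl⟩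

theorem stmt14 (p : ℕ) [Fact p.Prime] (a n : ℕ) (ha : 0 < a) (hn : 0 < n) (hpn : ¬ p ∣ n)
    (f : Fin a → Polynomial (ZMod (p ^ a)))
    (hmonic : ∀ i, (f i).Monic)
    (hdvd : ∀ i, f i ∣ (X ^ n - 1))
    (hchain : ∀ i j : Fin a, i ≤ j → f j ∣ f i) :
    Ideal.span (Set.range fun i : Fin a =>
        rmk p a n (C ((p : ZMod (p ^ a)) ^ (i : ℕ)) * f i)) =
      Ideal.span {rmk p a n (∑ i : Fin a, C ((p : ZMod (p ^ a)) ^ (i : ℕ)) * f i)} :=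
  stmt14_general p a n hpn f hdvd hchain
end

section
/- Let p be a prime, a and n positive integers, and let C be a ZMod p^a-submodule of (ZMod p^a)^n. Define the dual C^⊥ = {v ∈ (ZMod p^a)^n : Σ_{i=1}^{n} v_i·c_i = 0 for all c ∈ C}, which is again a submodule. Then (the cardinality of C)·(the cardinality of C^⊥) = p^{a·n}, and (C^⊥)^⊥ = C. -/
/-!
Linear functionals `A → ZMod N` on a finite `ZMod N`-module `A` are the characters of the
finite abelian group `A`, whose exponent divides `N`, with values in `ZMod N`; since `ZMod N`
has enough `N`-th "roots of unity", there are exactly `|A|` of them. Through the dot product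
the orthogonal `C^⊥` of a submodule `C ≤ (ZMod N)^n` is the annihilator of `C` in the dual
space, i.e. the dual of `(ZMod N)^n / C`, so `|C| · |C^⊥| = N^n`. Applied to `C^⊥` this gives
`|C^⊥⊥| = |C|`, and the inclusion `C ≤ C^⊥⊥` is then an equality.
-/

namespace ZMod

instance hasEnoughRootsOfUnity_multiplicative (N : ℕ) :
    HasEnoughRootsOfUnity (Multiplicative (ZMod N)) N where
  prim := ⟨.ofAdd 1, IsPrimitiveRoot.iff_orderOf.mpr <| by
    rw [orderOf_ofAdd_eq_addOrderOf, ZMod.addOrderOf_one]⟩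
  cyc :=
    have : IsCyclic (Multiplicative (ZMod N))ˣ := (MulEquiv.isCyclic toUnits).mp inferInstance
    Subgroup.isCyclic _

theorem card_dual_eq_card {N : ℕ} [NeZero N] (A : Type*) [AddCommGroup A] [Module (ZMod N) A]
    [Finite A] : Nat.card (Module.Dual (ZMod N) A) = Nat.card A := by
  have hexp : Monoid.exponent (Multiplicative A) ∣ N :=
    Monoid.exponent_dvd_of_forall_pow_eq_one fun x =>
      congrArg Multiplicative.ofAdd (ZModModule.char_nsmul_eq_zero N x.toAdd)
  have := HasEnoughRootsOfUnity.of_dvd (Multiplicative (ZMod N)) hexp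
  let e : Module.Dual (ZMod N) A ≃ (Multiplicative A →* (Multiplicative (ZMod N))ˣ) :=
    (AddMonoidHom.toZModLinearMapEquiv N).symm.toEquiv.trans <|
      AddMonoidHom.toMultiplicative.trans (MulEquiv.monoidHomCongrRight toUnits).toEquiv
  rw [Nat.card_congr e, CommGroup.card_monoidHom_of_hasEnoughRootsOfUnity]
  rfl

end ZMod

section DotOrthogonal

variable {R ι : Type*} [CommRing R] [Fintype ι] [DecidableEq ι]

def dotOrthogonal (C : Submodule R (ι → R)) : Submodule R (ι → R) :=
  C.dualAnnihilator.map ((dotProductEquiv R ι).symm : Module.Dual R (ι → R) →ₗ[R] ι → R)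

theorem mem_dotOrthogonal {C : Submodule R (ι → R)} {v : ι → R} :
    v ∈ dotOrthogonal C ↔ ∀ c ∈ C, v ⬝ᵥ c = 0 := by
  rw [dotOrthogonal, Submodule.mem_map_equiv, LinearEquiv.symm_symm,
    Submodule.mem_dualAnnihilator]
  rfl

theorem le_dotOrthogonal_dotOrthogonal (C : Submodule R (ι → R)) :
    C ≤ dotOrthogonal (dotOrthogonal C) := fun c hc =>
  mem_dotOrthogonal.mpr fun _ hw => dotProduct_comm c _ ▸ mem_dotOrthogonal.mp hw c hc

theorem card_dotOrthogonal (C : Submodule R (ι → R)) :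
    Nat.card (dotOrthogonal C) = Nat.card (Module.Dual R ((ι → R) ⧸ C)) :=
  Nat.card_congr
    ((C.dualQuotEquivDualAnnihilator.trans ((dotProductEquiv R ι).symm.submoduleMap _)).symm
      |>.toEquiv)

end DotOrthogonal

section ZModOrthogonal

variable {N : ℕ} [NeZero N] {ι : Type*} [Fintype ι] [DecidableEq ι]

theorem card_mul_card_dotOrthogonal (C : Submodule (ZMod N) (ι → ZMod N)) :
    Nat.card C * Nat.card (dotOrthogonal C) = N ^ Fintype.card ι := by
  rw [card_dotOrthogonal, ZMod.card_dual_eq_card, ← Submodule.card_eq_card_quotient_mul_card,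
    Nat.card_fun, Nat.card_zmod, Nat.card_eq_fintype_card]

theorem dotOrthogonal_dotOrthogonal (C : Submodule (ZMod N) (ι → ZMod N)) :
    dotOrthogonal (dotOrthogonal C) = C := by
  have hcard : Nat.card (dotOrthogonal (dotOrthogonal C)) = Nat.card C := by
    have h := (card_mul_card_dotOrthogonal (dotOrthogonal C)).trans
      (card_mul_card_dotOrthogonal C).symm
    rw [mul_comm (Nat.card C)] at h
    exact Nat.eq_of_mul_eq_mul_left Nat.card_pos h
  refine (Submodule.toAddSubgroup_injective ?_).symm
  exact AddSubgroup.eq_of_le_of_card_ge (le_dotOrthogonal_dotOrthogonal C) hcard.le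

end ZModOrthogonal

theorem stmt15_general (p : ℕ) [Fact p.Prime] (a n : ℕ)
    (C : Submodule (ZMod (p ^ a)) (Fin n → ZMod (p ^ a)))
    (Cdual : Submodule (ZMod (p ^ a)) (Fin n → ZMod (p ^ a)))
    (hCdual : ∀ v, v ∈ Cdual ↔ ∀ c ∈ C, ∑ i, v i * c i = 0) :
    Nat.card C * Nat.card Cdual = p ^ (a * n) ∧
    (∀ v, v ∈ C ↔ ∀ w ∈ Cdual, ∑ i, v i * w i = 0) := by
  have : NeZero (p ^ a) := ⟨pow_ne_zero a (Fact.out : p.Prime).ne_zero⟩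
  obtain rfl : Cdual = dotOrthogonal C :=
    Submodule.ext fun v => (hCdual v).trans mem_dotOrthogonal.symm
  refine ⟨by rw [card_mul_card_dotOrthogonal, Fintype.card_fin, pow_mul], fun v => ?_⟩
  conv_lhs => rw [← dotOrthogonal_dotOrthogonal C]
  exact mem_dotOrthogonal

theorem stmt15 (p : ℕ) [Fact p.Prime] (a n : ℕ) (ha : 0 < a) (hn : 0 < n)
    (C : Submodule (ZMod (p ^ a)) (Fin n → ZMod (p ^ a)))
    (Cdual : Submodule (ZMod (p ^ a)) (Fin n → ZMod (p ^ a)))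
    (hCdual : ∀ v, v ∈ Cdual ↔ ∀ c ∈ C, ∑ i, v i * c i = 0) :
    Nat.card C * Nat.card Cdual = p ^ (a * n) ∧
    (∀ v, v ∈ C ↔ ∀ w ∈ Cdual, ∑ i, v i * w i = 0) :=
  stmt15_general p a n C Cdual hCdual
end
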